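/- arXiv:1811.05527 — 7 statements merged into one kernel-verified Lean document; each statement's English description precedes it below -/
import Mathlib

section
/- As ε → 0⁺, the unique minimizer P_ε of the entropic regularized OT problem converges to the maximal-entropy element among the optimal solutions of the unregularized Kantorovich problem, i.e., P_ε → argmin{ −H(P) : P ∈ U(a,b), ⟨P,C⟩ = W⁰_C(a,b) }. -/
/-! Testing the regularized minimizer `P ε` against `P0` gives `H P0 ≤ H (P ε)` and
`⟨P ε, C⟩ ≤ W⁰ + ε (max_U H - H P0)`. So every cluster point `Q` of `P ε` in the compact
polytope `U(a,b)` is a Kantorovich optimum with `H Q ≥ H P0`, and strict concavity of `H` on the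
convex set of optima forces `Q = P0`. -/

open Finset Real Filter

noncomputable def entropy {n m : ℕ} (P : Matrix (Fin n) (Fin m) ℝ) : ℝ :=
  -∑ i, ∑ j, P i j * (Real.log (P i j) - 1)

def couplings {n m : ℕ} (a : Fin n → ℝ) (b : Fin m → ℝ) :
    Set (Matrix (Fin n) (Fin m) ℝ) :=
  {P | (∀ i j, 0 ≤ P i j) ∧ (∀ i, ∑ j, P i j = a i) ∧ (∀ j, ∑ i, P i j = b j)}

noncomputable def dotp {n m : ℕ} (P C : Matrix (Fin n) (Fin m) ℝ) : ℝ :=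
  ∑ i, ∑ j, P i j * C i j

/-- The unregularized optimal value `W⁰_C(a,b)`. -/
noncomputable def W0 {n m : ℕ} (C : Matrix (Fin n) (Fin m) ℝ)
    (a : Fin n → ℝ) (b : Fin m → ℝ) : ℝ :=
  sInf {v | ∃ P ∈ couplings a b, v = dotp P C}

open Topology

theorem MapClusterPt.eq_of_tendsto {α X : Type*} [TopologicalSpace X] [T2Space X]
    {F : Filter α} {u : α → X} {x y : X} (hx : MapClusterPt x F u) (hy : Tendsto u F (𝓝 y)) :
    x = y :=
  eq_of_nhds_neBot (ClusterPt.mono hx hy)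

theorem StrictConvexOn.sum_apply {ι E : Type*} [Fintype ι] [AddCommGroup E] [Module ℝ E]
    {s : Set E} {g : E → ℝ} (hg : StrictConvexOn ℝ s g) :
    StrictConvexOn ℝ (Set.univ.pi fun _ : ι => s) fun x => ∑ i, g (x i) := by
  refine ⟨convex_pi fun i _ => hg.1, fun x hx y hy hxy t u ht hu htu => ?_⟩
  obtain ⟨i, hi⟩ := Function.ne_iff.mp hxy
  have hx' := Set.mem_univ_pi.mp hx
  have hy' := Set.mem_univ_pi.mp hy
  calc ∑ k, g ((t • x + u • y) k)
      < ∑ k, (t • g (x k) + u • g (y k)) :=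
        Finset.sum_lt_sum (fun k _ => hg.convexOn.2 (hx' k) (hy' k) ht.le hu.le htu)
          ⟨i, Finset.mem_univ i, hg.2 (hx' i) (hy' i) hi ht hu htu⟩
    _ = t • ∑ k, g (x k) + u • ∑ k, g (y k) := by
        rw [Finset.sum_add_distrib, Finset.smul_sum, Finset.smul_sum]

namespace EntropicOT

variable {n m : ℕ}

noncomputable def optimalCouplings (C : Matrix (Fin n) (Fin m) ℝ) (a : Fin n → ℝ)
    (b : Fin m → ℝ) : Set (Matrix (Fin n) (Fin m) ℝ) :=
  {P ∈ couplings a b | dotp P C = W0 C a b}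

theorem continuous_entropy : Continuous (entropy : Matrix (Fin n) (Fin m) ℝ → ℝ) := by
  have hg : Continuous fun x : ℝ => x * (log x - 1) :=
    (continuous_mul_log.sub continuous_id).congr fun x => by simp [mul_sub]
  exact (continuous_finsetSum _ fun i _ => continuous_finsetSum _ fun j _ =>
    hg.comp (by fun_prop)).neg

theorem continuous_dotp (C : Matrix (Fin n) (Fin m) ℝ) : Continuous fun P => dotp P C := by
  unfold dotp
  fun_prop

theorem isClosed_couplings (a : Fin n → ℝ) (b : Fin m → ℝ) : IsClosed (couplings a b) := by
  simp only [couplings, Set.ofPred_and, Set.ofPred_forall]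
  refine .inter (isClosed_iInter fun i => isClosed_iInter fun j => isClosed_le ?_ ?_) <|
    .inter (isClosed_iInter fun i => isClosed_eq ?_ ?_) (isClosed_iInter fun j => isClosed_eq ?_ ?_)
  all_goals fun_prop

theorem apply_le_of_mem_couplings {a : Fin n → ℝ} {b : Fin m → ℝ} {P : Matrix (Fin n) (Fin m) ℝ}
    (hP : P ∈ couplings a b) (i : Fin n) (j : Fin m) : P i j ≤ a i :=
  hP.2.1 i ▸ Finset.single_le_sum (fun k _ => hP.1 i k) (Finset.mem_univ j)

theorem isCompact_couplings (a : Fin n → ℝ) (b : Fin m → ℝ) : IsCompact (couplings a b) := by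
  refine (isCompact_univ_pi fun i => isCompact_univ_pi fun _ => isCompact_Icc (a := 0) (b := a i))
    |>.of_isClosed_subset (isClosed_couplings a b) fun P hP => ?_
  simp only [Set.mem_univ_pi]
  exact fun i j => ⟨hP.1 i j, apply_le_of_mem_couplings hP i j⟩

theorem W0_le_dotp (C : Matrix (Fin n) (Fin m) ℝ) {a : Fin n → ℝ} {b : Fin m → ℝ}
    {R : Matrix (Fin n) (Fin m) ℝ} (hR : R ∈ couplings a b) : W0 C a b ≤ dotp R C := by
  refine csInf_le ?_ ⟨R, hR, rfl⟩
  obtain ⟨c, hc⟩ := (isCompact_couplings a b).bddBelow_image (continuous_dotp C).continuousOn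
  exact ⟨c, by rintro _ ⟨Q, hQ, rfl⟩; exact hc ⟨Q, hQ, rfl⟩⟩

theorem dotp_smul_add_smul (P Q C : Matrix (Fin n) (Fin m) ℝ) (s t : ℝ) :
    dotp (s • P + t • Q) C = s * dotp P C + t * dotp Q C := by
  simp only [dotp, Matrix.add_apply, Matrix.smul_apply, smul_eq_mul, Finset.mul_sum,
    ← Finset.sum_add_distrib]
  exact Finset.sum_congr rfl fun i _ => Finset.sum_congr rfl fun j _ => by ring

theorem convex_couplings (a : Fin n → ℝ) (b : Fin m → ℝ) : Convex ℝ (couplings a b) := by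
  intro P hP Q hQ s t hs ht hst
  refine ⟨fun i j => ?_, fun i => ?_, fun j => ?_⟩
  · simp only [Matrix.add_apply, Matrix.smul_apply, smul_eq_mul]
    exact add_nonneg (mul_nonneg hs (hP.1 i j)) (mul_nonneg ht (hQ.1 i j))
  · simp only [Matrix.add_apply, Matrix.smul_apply, smul_eq_mul, Finset.sum_add_distrib,
      ← Finset.mul_sum, hP.2.1 i, hQ.2.1 i, ← add_mul, hst, one_mul]
  · simp only [Matrix.add_apply, Matrix.smul_apply, smul_eq_mul, Finset.sum_add_distrib,
      ← Finset.mul_sum, hP.2.2 j, hQ.2.2 j, ← add_mul, hst, one_mul]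

theorem convex_optimalCouplings (C : Matrix (Fin n) (Fin m) ℝ) (a : Fin n → ℝ)
    (b : Fin m → ℝ) : Convex ℝ (optimalCouplings C a b) := by
  intro P hP Q hQ s t hs ht hst
  refine ⟨convex_couplings a b hP.1 hQ.1 hs ht hst, ?_⟩
  rw [dotp_smul_add_smul, hP.2, hQ.2, ← add_mul, hst, one_mul]

theorem strictConcaveOn_entropy :
    StrictConcaveOn ℝ (Set.univ.pi fun _ : Fin n => Set.univ.pi fun _ : Fin m => Set.Ici (0 : ℝ))
      (entropy : Matrix (Fin n) (Fin m) ℝ → ℝ) := by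
  have hg : StrictConvexOn ℝ (Set.Ici 0) fun x : ℝ => x * (log x - 1) := by
    have hsplit : (fun x : ℝ => x * (log x - 1)) = (fun x => x * log x) - id := by
      funext x
      simp [mul_sub]
    exact hsplit ▸ strictConvexOn_mul_log.sub_concaveOn (concaveOn_id (convex_Ici 0))
  exact hg.sum_apply.sum_apply.neg

theorem entropy_le_of_regularized_min {C R P0 : Matrix (Fin n) (Fin m) ℝ} {a : Fin n → ℝ}
    {b : Fin m → ℝ} {ε : ℝ} (hε : 0 < ε) (hR : R ∈ couplings a b)
    (hmin : ∀ Q ∈ couplings a b, dotp R C - ε * entropy R ≤ dotp Q C - ε * entropy Q)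
    (hP0 : P0 ∈ optimalCouplings C a b) : entropy P0 ≤ entropy R := by
  have hcompare := hmin P0 hP0.1
  have hW0 := W0_le_dotp C hR
  rw [hP0.2] at hcompare
  exact le_of_mul_le_mul_left (by linarith) hε

theorem tendsto_dotp_regularized_min {C P0 : Matrix (Fin n) (Fin m) ℝ} {a : Fin n → ℝ}
    {b : Fin m → ℝ} {P : ℝ → Matrix (Fin n) (Fin m) ℝ}
    (hP : ∀ ε > (0:ℝ), P ε ∈ couplings a b ∧
      ∀ Q ∈ couplings a b, dotp (P ε) C - ε * entropy (P ε) ≤ dotp Q C - ε * entropy Q)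
    (hP0 : P0 ∈ optimalCouplings C a b) :
    Tendsto (fun ε => dotp (P ε) C) (𝓝[>] 0) (𝓝 (W0 C a b)) := by
  obtain ⟨K, hK⟩ := (isCompact_couplings a b).bddAbove_image continuous_entropy.continuousOn
  have hupper : Tendsto (fun ε => W0 C a b + ε * (K - entropy P0)) (𝓝[>] 0) (𝓝 (W0 C a b)) := by
    have hε : Tendsto (fun ε : ℝ => ε) (𝓝[>] 0) (𝓝 0) := nhdsWithin_le_nhds
    simpa using (hε.mul_const (K - entropy P0)).const_add (W0 C a b)
  refine tendsto_of_tendsto_of_tendsto_of_le_of_le' tendsto_const_nhds hupper ?_ ?_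
  · filter_upwards [self_mem_nhdsWithin] with ε hε
    exact W0_le_dotp C (hP ε hε).1
  · filter_upwards [self_mem_nhdsWithin] with ε hε
    have hcompare := (hP ε hε).2 P0 hP0.1
    have hbound : entropy (P ε) ≤ K := hK ⟨_, (hP ε hε).1, rfl⟩
    rw [hP0.2] at hcompare
    nlinarith [mul_le_mul_of_nonneg_left hbound (le_of_lt hε)]

end EntropicOT

open EntropicOT in
theorem stmt2_general {n m : ℕ} (a : Fin n → ℝ) (b : Fin m → ℝ)
    (C : Matrix (Fin n) (Fin m) ℝ)
    (P : ℝ → Matrix (Fin n) (Fin m) ℝ)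
    (hP : ∀ ε > (0:ℝ), P ε ∈ couplings a b ∧
      ∀ Q ∈ couplings a b,
        dotp (P ε) C - ε * entropy (P ε) ≤ dotp Q C - ε * entropy Q)
    (P0 : Matrix (Fin n) (Fin m) ℝ)
    (hP0 : P0 ∈ couplings a b ∧ dotp P0 C = W0 C a b ∧
      ∀ Q ∈ couplings a b, dotp Q C = W0 C a b → -entropy P0 ≤ -entropy Q) :
    Tendsto P (nhdsWithin 0 (Set.Ioi 0)) (nhds P0) := by
  have hP0opt : P0 ∈ optimalCouplings C a b := ⟨hP0.1, hP0.2.1⟩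
  have hP0max : IsMaxOn entropy (optimalCouplings C a b) P0 := fun R hR =>
    neg_le_neg_iff.1 (hP0.2.2 R hR.1 hR.2)
  refine (isCompact_couplings a b).tendsto_nhds_of_unique_mapClusterPt
    (eventually_nhdsWithin_of_forall fun ε hε => (hP ε hε).1) fun Q hQ hQP => ?_
  have hQopt : Q ∈ optimalCouplings C a b :=
    ⟨hQ, (hQP.continuousAt_comp (continuous_dotp C).continuousAt).eq_of_tendsto
      (tendsto_dotp_regularized_min hP hP0opt)⟩
  have hQent : entropy P0 ≤ entropy Q :=
    (isClosed_le continuous_const continuous_entropy).mem_of_mapClusterPt hQP <|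
      eventually_nhdsWithin_of_forall fun ε hε =>
        entropy_le_of_regularized_min hε (hP ε hε).1 (hP ε hε).2 hP0opt
  have hconcave : StrictConcaveOn ℝ (optimalCouplings C a b) entropy :=
    strictConcaveOn_entropy.subset
      (fun R hR => Set.mem_univ_pi.2 fun i => Set.mem_univ_pi.2 fun j => hR.1.1 i j)
      (convex_optimalCouplings C a b)
  exact hconcave.eq_of_isMaxOn (fun R hR => (hP0max hR).trans hQent) hP0max hQopt hP0opt

theorem stmt2 {n m : ℕ} (a : Fin n → ℝ) (b : Fin m → ℝ)
    (ha : (∀ i, 0 ≤ a i) ∧ ∑ i, a i = 1) (hb : (∀ j, 0 ≤ b j) ∧ ∑ j, b j = 1)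
    (C : Matrix (Fin n) (Fin m) ℝ)
    (P : ℝ → Matrix (Fin n) (Fin m) ℝ)
    (hP : ∀ ε > (0:ℝ), P ε ∈ couplings a b ∧
      ∀ Q ∈ couplings a b,
        dotp (P ε) C - ε * entropy (P ε) ≤ dotp Q C - ε * entropy Q)
    (P0 : Matrix (Fin n) (Fin m) ℝ)
    (hP0 : P0 ∈ couplings a b ∧ dotp P0 C = W0 C a b ∧
      ∀ Q ∈ couplings a b, dotp Q C = W0 C a b → -entropy P0 ≤ -entropy Q) :
    Tendsto P (nhdsWithin 0 (Set.Ioi 0)) (nhds P0) :=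
  stmt2_general a b C P hP P0 hP0
end

section
/- As ε → 0⁺, the entropic regularized OT cost W^ε_C(a,b) converges to the unregularized optimal transport cost W⁰_C(a,b). -/
/-! Every coupling whose first marginal has total mass `1` has entries in `[0, 1]`, where
`x (log x - 1)` takes values in `[-1, 0]`; hence `|H(P)| ≤ n m` uniformly over `U(a,b)`. Each
objective `ε ↦ ⟨P,C⟩ - ε H(P)` is then `n m`-Lipschitz in `ε`, and so is their infimum
`W^ε_C(a,b)`; in particular it is continuous at `ε = 0`. -/

open Finset Real Filter

/-- The regularized optimal value `W^ε_C(a,b)`; for `ε = 0` this is the Kantorovich value. -/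
noncomputable def W {n m : ℕ} (C : Matrix (Fin n) (Fin m) ℝ) (ε : ℝ)
    (a : Fin n → ℝ) (b : Fin m → ℝ) : ℝ :=
  sInf {v | ∃ P ∈ couplings a b, v = dotp P C - ε * entropy P}

open scoped NNReal

section sInfPerturbation

variable {α : Type*} {S : Set α} {f g : α → ℝ} {M : ℝ}

lemma csInf_image_sub_csInf_image_le (hg : BddBelow (g '' S)) (hM : 0 ≤ M)
    (h : ∀ x ∈ S, g x - f x ≤ M) : sInf (g '' S) - sInf (f '' S) ≤ M := by
  rcases S.eq_empty_or_nonempty with rfl | hS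
  · simpa using hM
  rw [sub_le_comm]
  refine le_csInf (hS.image f) ?_
  rintro _ ⟨x, hx, rfl⟩
  linarith [csInf_le hg (Set.mem_image_of_mem g hx), h x hx]

lemma abs_csInf_image_sub_le (hf : BddBelow (f '' S)) (hg : BddBelow (g '' S)) (hM : 0 ≤ M)
    (h : ∀ x ∈ S, |g x - f x| ≤ M) : |sInf (g '' S) - sInf (f '' S)| ≤ M :=
  abs_sub_le_iff.2
    ⟨csInf_image_sub_csInf_image_le hg hM fun x hx => (abs_sub_le_iff.1 (h x hx)).1,
      csInf_image_sub_csInf_image_le hf hM fun x hx => (abs_sub_le_iff.1 (h x hx)).2⟩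

end sInfPerturbation

lemma abs_mul_log_sub_one_le_one {x : ℝ} (hx₀ : 0 ≤ x) (hx₁ : x ≤ 1) :
    |x * (log x - 1)| ≤ 1 := by
  rw [mul_sub, mul_one, abs_le]
  constructor
  · linarith [self_sub_one_le_mul_log hx₀]
  · linarith [mul_log_nonpos hx₀ hx₁]

variable {n m : ℕ}

lemma mem_Icc_of_mem_couplings {a : Fin n → ℝ} {b : Fin m → ℝ} (ha : ∑ i, a i = 1)
    {P : Matrix (Fin n) (Fin m) ℝ} (hP : P ∈ couplings a b) (i : Fin n) (j : Fin m) :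
    P i j ∈ Set.Icc 0 1 := by
  obtain ⟨hP₀, hProw, -⟩ := hP
  have ha₀ : ∀ i, 0 ≤ a i := fun i => hProw i ▸ sum_nonneg fun j _ => hP₀ i j
  refine ⟨hP₀ i j, ?_⟩
  calc P i j ≤ ∑ j', P i j' := single_le_sum (fun j' _ => hP₀ i j') (mem_univ j)
    _ = a i := hProw i
    _ ≤ ∑ i', a i' := single_le_sum (fun i' _ => ha₀ i') (mem_univ i)
    _ = 1 := ha

section UnitEntries

variable {P : Matrix (Fin n) (Fin m) ℝ} (hP : ∀ i j, P i j ∈ Set.Icc 0 1)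
include hP

lemma abs_entropy_le : |entropy P| ≤ n * m := by
  calc |entropy P| ≤ ∑ i, ∑ j, |P i j * (log (P i j) - 1)| := by
        rw [entropy, abs_neg]
        exact (abs_sum_le_sum_abs _ _).trans (sum_le_sum fun i _ => abs_sum_le_sum_abs _ _)
    _ ≤ ∑ _i : Fin n, ∑ _j : Fin m, (1 : ℝ) := by
        gcongr with i _ j _
        exact abs_mul_log_sub_one_le_one (hP i j).1 (hP i j).2
    _ = n * m := by simp

lemma abs_dotp_le (C : Matrix (Fin n) (Fin m) ℝ) : |dotp P C| ≤ ∑ i, ∑ j, |C i j| := by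
  calc |dotp P C| ≤ ∑ i, ∑ j, |P i j * C i j| :=
        (abs_sum_le_sum_abs _ _).trans (sum_le_sum fun i _ => abs_sum_le_sum_abs _ _)
    _ ≤ ∑ i, ∑ j, |C i j| := sum_le_sum fun i _ => sum_le_sum fun j _ => by
        rw [abs_mul, abs_of_nonneg (hP i j).1]
        exact mul_le_of_le_one_left (abs_nonneg _) (hP i j).2

end UnitEntries

section Regularized

variable (C : Matrix (Fin n) (Fin m) ℝ) {a : Fin n → ℝ} (b : Fin m → ℝ)

lemma W_eq_sInf_image (ε : ℝ) :
    W C ε a b = sInf ((fun P => dotp P C - ε * entropy P) '' couplings a b) := by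
  simp only [W, Set.image, eq_comm]

lemma bddBelow_image_dotp_sub_mul_entropy (ha : ∑ i, a i = 1) (ε : ℝ) :
    BddBelow ((fun P => dotp P C - ε * entropy P) '' couplings a b) := by
  refine ⟨-(∑ i, ∑ j, |C i j|) - |ε| * (n * m), ?_⟩
  rintro _ ⟨P, hP, rfl⟩
  have hP := mem_Icc_of_mem_couplings ha hP
  have hdotp := (abs_le.1 (abs_dotp_le hP C)).1
  have hent : |ε * entropy P| ≤ |ε| * (n * m) := by
    rw [abs_mul]; gcongr; exact abs_entropy_le hP
  simp only
  linarith [le_abs_self (ε * entropy P)]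

lemma abs_W_sub_W_le (ha : ∑ i, a i = 1) (ε δ : ℝ) :
    |W C ε a b - W C δ a b| ≤ n * m * |ε - δ| := by
  rw [W_eq_sInf_image, W_eq_sInf_image]
  refine abs_csInf_image_sub_le (bddBelow_image_dotp_sub_mul_entropy C b ha δ)
    (bddBelow_image_dotp_sub_mul_entropy C b ha ε) (by positivity) fun P hP => ?_
  calc |dotp P C - ε * entropy P - (dotp P C - δ * entropy P)| = |ε - δ| * |entropy P| := by
        rw [abs_sub_comm ε δ, ← abs_mul]; congr 1; ring
    _ ≤ |ε - δ| * (n * m) := by gcongr; exact abs_entropy_le (mem_Icc_of_mem_couplings ha hP)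
    _ = n * m * |ε - δ| := mul_comm _ _

lemma lipschitzWith_W (ha : ∑ i, a i = 1) :
    LipschitzWith (n * m : ℝ≥0) (fun ε => W C ε a b) :=
  LipschitzWith.of_dist_le_mul fun ε δ => by
    simpa only [Real.dist_eq, NNReal.coe_mul, NNReal.coe_natCast] using abs_W_sub_W_le C b ha ε δ

end Regularized

theorem stmt3_general {n m : ℕ} (a : Fin n → ℝ) (b : Fin m → ℝ)
    (ha : (∀ i, 0 ≤ a i) ∧ ∑ i, a i = 1)
    (C : Matrix (Fin n) (Fin m) ℝ) :
    Tendsto (fun ε => W C ε a b) (nhdsWithin 0 (Set.Ioi 0)) (nhds (W C 0 a b)) :=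
  ((lipschitzWith_W C b ha.2).continuous.tendsto 0).mono_left nhdsWithin_le_nhds

theorem stmt3 {n m : ℕ} (a : Fin n → ℝ) (b : Fin m → ℝ)
    (ha : (∀ i, 0 ≤ a i) ∧ ∑ i, a i = 1) (hb : (∀ j, 0 ≤ b j) ∧ ∑ j, b j = 1)
    (C : Matrix (Fin n) (Fin m) ℝ) :
    Tendsto (fun ε => W C ε a b) (nhdsWithin 0 (Set.Ioi 0)) (nhds (W C 0 a b)) :=
  stmt3_general a b ha C
end

section
/- As ε → ∞, the unique minimizer P_ε of the entropic regularized OT problem converges to the independent coupling a bᵀ, i.e., (P_ε)_{ij} → a_i b_j for all i, j. -/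
open Finset Real Filter

/-!
Against the independent coupling `a bᵀ`, the entropy deficit of any coupling `R` is the
Kullback–Leibler divergence `KL(R ‖ a bᵀ)`, which dominates the squared Hellinger distance
`∑ (√R - √(a bᵀ))²`. Comparing `P_ε` with `a bᵀ` in the regularized problem bounds
`ε · KL(P_ε ‖ a bᵀ)` by twice the total cost `∑ |C|`, so `√P_ε → √(a bᵀ)` at rate `ε^(-1/2)`.
-/

lemma single_le_sum_sum {ι κ M : Type*} [Fintype ι] [Fintype κ] [AddCommMonoid M]
    [PartialOrder M] [IsOrderedAddMonoid M] {f : ι → κ → M} (hf : ∀ i j, 0 ≤ f i j)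
    (i : ι) (j : κ) : f i j ≤ ∑ i, ∑ j, f i j :=
  (single_le_sum (fun j _ => hf i j) (mem_univ j)).trans
    (single_le_sum (fun i _ => sum_nonneg fun j _ => hf i j) (mem_univ i))

lemma sq_sqrt_sub_sqrt_le {x y : ℝ} (hx : 0 ≤ x) (hy : 0 ≤ y) (hxy : y = 0 → x = 0) :
    (√x - √y) ^ 2 ≤ x * log x - x * log y - x + y := by
  rcases hx.eq_or_lt with rfl | hx
  · simp [Real.sq_sqrt hy]
  have hy : 0 < y := hy.lt_of_ne' fun h => hx.ne' (hxy h)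
  have hsx := Real.sqrt_pos.2 hx
  have hsy := Real.sqrt_pos.2 hy
  have hlog : 1 - √y / √x ≤ (log x - log y) / 2 := by
    have := Real.one_sub_inv_le_log_of_pos (div_pos hsx hsy)
    rwa [inv_div, Real.log_div hsx.ne' hsy.ne', Real.log_sqrt hx.le, Real.log_sqrt hy.le,
      ← sub_div] at this
  have hlog_mul : 2 * (x - √x * √y) ≤ x * (log x - log y) := by
    have hmul := mul_le_mul_of_nonneg_left hlog (by positivity : 0 ≤ 2 * x)
    have e : 2 * x * (1 - √y / √x) = 2 * (x - √x * √y) := by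
      field_simp
      linear_combination √y * Real.sq_sqrt hx.le
    linarith
  nlinarith [Real.sq_sqrt hx.le, Real.sq_sqrt hy.le]

section couplings

variable {n m : ℕ} {a : Fin n → ℝ} {b : Fin m → ℝ} {R : Matrix (Fin n) (Fin m) ℝ}

lemma vecMulVec_mem_couplings (ha₀ : ∀ i, 0 ≤ a i) (hb₀ : ∀ j, 0 ≤ b j)
    (ha₁ : ∑ i, a i = 1) (hb₁ : ∑ j, b j = 1) : Matrix.vecMulVec a b ∈ couplings a b :=
  ⟨fun i j => mul_nonneg (ha₀ i) (hb₀ j),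
    fun i => by simp [Matrix.vecMulVec_apply, ← mul_sum, hb₁],
    fun j => by simp [Matrix.vecMulVec_apply, ← sum_mul, ha₁]⟩

lemma entry_eq_zero_of_mem_couplings (hR : R ∈ couplings a b) {i j} (h : a i * b j = 0) :
    R i j = 0 := by
  rcases mul_eq_zero.1 h with h | h
  · exact (sum_eq_zero_iff_of_nonneg fun j _ => hR.1 i j).1 ((hR.2.1 i).trans h) j (mem_univ j)
  · exact (sum_eq_zero_iff_of_nonneg fun i _ => hR.1 i j).1 ((hR.2.2 j).trans h) i (mem_univ i)

lemma sum_sum_of_mem_couplings (hR : R ∈ couplings a b) : ∑ i, ∑ j, R i j = ∑ i, a i := by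
  simp only [hR.2.1]

lemma entry_le_one_of_mem_couplings (hR : R ∈ couplings a b) (ha : ∑ i, a i = 1) (i j) :
    R i j ≤ 1 :=
  (single_le_sum_sum hR.1 i j).trans_eq ((sum_sum_of_mem_couplings hR).trans ha)

lemma sum_mul_log_vecMulVec (hR : R ∈ couplings a b) :
    ∑ i, ∑ j, R i j * log (a i * b j) = ∑ i, a i * log (a i) + ∑ j, b j * log (b j) := by
  have hsplit : ∀ i j, R i j * log (a i * b j) = R i j * log (a i) + R i j * log (b j) := by
    intro i j
    by_cases h : a i * b j = 0
    · simp [entry_eq_zero_of_mem_couplings hR h]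
    · rw [mul_eq_zero, not_or] at h
      rw [log_mul h.1 h.2, mul_add]
  simp only [hsplit, sum_add_distrib, ← sum_mul, hR.2.1]
  rw [sum_comm]
  simp only [← sum_mul, hR.2.2]

lemma entropy_vecMulVec_sub_entropy (hR : R ∈ couplings a b)
    (hQ : Matrix.vecMulVec a b ∈ couplings a b) :
    entropy (Matrix.vecMulVec a b) - entropy R =
      ∑ i, ∑ j, (R i j * log (R i j) - R i j * log (a i * b j) - R i j + a i * b j) := by
  have hcross := (sum_mul_log_vecMulVec hQ).trans (sum_mul_log_vecMulVec hR).symm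
  have hmass := (sum_sum_of_mem_couplings hQ).trans (sum_sum_of_mem_couplings hR).symm
  simp only [Matrix.vecMulVec_apply] at hcross hmass
  simp only [entropy, Matrix.vecMulVec_apply, mul_sub, mul_one, sum_sub_distrib, sum_add_distrib]
  linarith

lemma sum_sq_sqrt_sub_le_entropy_sub (hR : R ∈ couplings a b)
    (hQ : Matrix.vecMulVec a b ∈ couplings a b) :
    ∑ i, ∑ j, (√(R i j) - √(a i * b j)) ^ 2 ≤
      entropy (Matrix.vecMulVec a b) - entropy R := by
  rw [entropy_vecMulVec_sub_entropy hR hQ]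
  gcongr with i _ j _
  exact sq_sqrt_sub_sqrt_le (hR.1 i j) (hQ.1 i j) (entry_eq_zero_of_mem_couplings hR)

lemma abs_dotp_le_of_mem_couplings (hR : R ∈ couplings a b) (ha : ∑ i, a i = 1)
    (C : Matrix (Fin n) (Fin m) ℝ) : |dotp R C| ≤ ∑ i, ∑ j, |C i j| := by
  refine (abs_sum_le_sum_abs _ _).trans (sum_le_sum fun i _ => ?_)
  refine (abs_sum_le_sum_abs _ _).trans (sum_le_sum fun j _ => ?_)
  rw [abs_mul, abs_of_nonneg (hR.1 i j)]
  exact mul_le_of_le_one_left (abs_nonneg _) (entry_le_one_of_mem_couplings hR ha i j)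

lemma mul_sum_sq_sqrt_sub_le {ε : ℝ} (hε : 0 < ε) (C : Matrix (Fin n) (Fin m) ℝ)
    (ha : ∑ i, a i = 1) (hR : R ∈ couplings a b) (hQ : Matrix.vecMulVec a b ∈ couplings a b)
    (hmin : dotp R C - ε * entropy R ≤
      dotp (Matrix.vecMulVec a b) C - ε * entropy (Matrix.vecMulVec a b)) :
    ε * ∑ i, ∑ j, (√(R i j) - √(a i * b j)) ^ 2 ≤ 2 * ∑ i, ∑ j, |C i j| := by
  have hR' := abs_le.1 (abs_dotp_le_of_mem_couplings hR ha C)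
  have hQ' := abs_le.1 (abs_dotp_le_of_mem_couplings hQ ha C)
  calc ε * ∑ i, ∑ j, (√(R i j) - √(a i * b j)) ^ 2
      ≤ ε * (entropy (Matrix.vecMulVec a b) - entropy R) :=
        mul_le_mul_of_nonneg_left (sum_sq_sqrt_sub_le_entropy_sub hR hQ) hε.le
    _ ≤ 2 * ∑ i, ∑ j, |C i j| := by linarith

end couplings

lemma tendsto_of_mul_sq_sub_le {f : ℝ → ℝ} {c K : ℝ} (h : ∀ ε > 0, ε * (f ε - c) ^ 2 ≤ K) :
    Tendsto f atTop (nhds c) := by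
  rw [tendsto_iff_dist_tendsto_zero]
  have hlim : Tendsto (fun ε : ℝ => √(K / ε)) atTop (nhds 0) := by
    simpa [Function.comp_def] using (Real.continuous_sqrt.tendsto 0).comp
      (tendsto_const_nhds.div_atTop tendsto_id : Tendsto (fun ε : ℝ => K / ε) atTop (nhds 0))
  refine squeeze_zero' (Eventually.of_forall fun _ => dist_nonneg) ?_ hlim
  filter_upwards [eventually_gt_atTop 0] with ε hε
  rw [Real.dist_eq]
  exact Real.abs_le_sqrt ((le_div_iff₀' hε).2 (h ε hε))

theorem stmt4 {n m : ℕ} (a : Fin n → ℝ) (b : Fin m → ℝ)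
    (ha : (∀ i, 0 ≤ a i) ∧ ∑ i, a i = 1) (hb : (∀ j, 0 ≤ b j) ∧ ∑ j, b j = 1)
    (C : Matrix (Fin n) (Fin m) ℝ)
    (P : ℝ → Matrix (Fin n) (Fin m) ℝ)
    (hP : ∀ ε > (0:ℝ), P ε ∈ couplings a b ∧
      ∀ Q ∈ couplings a b,
        dotp (P ε) C - ε * entropy (P ε) ≤ dotp Q C - ε * entropy Q) :
    Tendsto P atTop (nhds (Matrix.of fun i j => a i * b j)) := by
  have hQ := vecMulVec_mem_couplings ha.1 hb.1 ha.2 hb.2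
  have hbound : ∀ i j, ∀ ε > 0, ε * (√(P ε i j) - √(a i * b j)) ^ 2 ≤ 2 * ∑ i, ∑ j, |C i j| := by
    intro i j ε hε
    obtain ⟨hPε, hmin⟩ := hP ε hε
    refine le_trans ?_ (mul_sum_sq_sqrt_sub_le hε C ha.2 hPε hQ (hmin _ hQ))
    exact mul_le_mul_of_nonneg_left
      (single_le_sum_sum (f := fun i j => (√(P ε i j) - √(a i * b j)) ^ 2)
        (fun _ _ => sq_nonneg _) i j) hε.le
  refine tendsto_pi_nhds.2 fun i => tendsto_pi_nhds.2 fun j => ?_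
  have hsqrt := (tendsto_of_mul_sq_sub_le (hbound i j)).pow 2
  rw [Real.sq_sqrt (mul_nonneg (ha.1 i) (hb.1 j))] at hsqrt
  refine hsqrt.congr' ?_
  filter_upwards [eventually_gt_atTop 0] with ε hε
  exact Real.sq_sqrt ((hP ε hε).1.1 i j)
end

section
/- For ε = 0, the Kantorovich problem satisfies W⁰_C(a,b) = max{⟨f,a⟩ + ⟨g,b⟩ : f ∈ ℝ^n, g ∈ ℝ^m, f_i + g_j ≤ C_{ij} for all i,j} (linear programming duality for optimal transport). -/
open Finset Real

/-!
`W0 C a b` is the value of the linear program `min ⟨C, P⟩` over `P ≥ 0` with row sums `a` and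
column sums `b`, and the potentials `(f, g)` are exactly the feasible points of its dual. Weak
duality gives `⟨f, a⟩ + ⟨g, b⟩ ≤ ⟨C, P⟩`; the product coupling `a bᵀ` makes the primal feasible and
a constant potential below `C` makes the dual feasible. Strong duality, with the dual optimum
attained, follows from Gale's form of Farkas' lemma applied to the system homogenized by an extra
column `-b`. Farkas' lemma itself is Hahn–Banach separation from the cone generated by finitely
many vectors, which is closed: by Carathéodory's argument it is a finite union of cones with
linearly independent generators, each the image of an orthant under an injective linear map.
-/

section Cone

variable {ι E : Type*} [AddCommGroup E] [Module ℝ E]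

def nonnegCombinations (v : ι → E) (s : Finset ι) : Set E :=
  {z | ∃ x : ι → ℝ, (∀ i ∈ s, 0 ≤ x i) ∧ ∑ i ∈ s, x i • v i = z}

theorem nonnegCombinations_mono (v : ι → E) {s t : Finset ι} (hst : s ⊆ t) :
    nonnegCombinations v s ⊆ nonnegCombinations v t := by
  classical
  rintro z ⟨x, hx, rfl⟩
  refine ⟨fun i => if i ∈ s then x i else 0, fun i _ => ?_, ?_⟩
  · dsimp only
    split_ifs with hi
    exacts [hx i hi, le_rfl]
  · rw [← sum_subset hst fun i _ hi => by simp [hi]]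
    exact sum_congr rfl fun i hi => by simp [hi]

theorem exists_pos_relation_of_not_linearIndepOn {v : ι → E} {s : Finset ι}
    (h : ¬LinearIndepOn ℝ v s) : ∃ c : ι → ℝ, ∑ i ∈ s, c i • v i = 0 ∧ ∃ j ∈ s, 0 < c j := by
  obtain ⟨c, hc, j, hj, hcj⟩ := not_linearIndepOn_finset_iff.1 h
  rcases hcj.lt_or_gt with hneg | hpos
  · exact ⟨-c, by simp [neg_smul, sum_neg_distrib, hc], j, hj, neg_pos.2 hneg⟩
  · exact ⟨c, hc, j, hj, hpos⟩

theorem nonnegCombinations_subset_biUnion_erase [DecidableEq ι] {v : ι → E} {s : Finset ι}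
    (h : ¬LinearIndepOn ℝ v s) :
    nonnegCombinations v s ⊆ ⋃ j ∈ s, nonnegCombinations v (s.erase j) := by
  obtain ⟨c, hc, hpos⟩ := exists_pos_relation_of_not_linearIndepOn h
  rintro z ⟨x, hx, rfl⟩
  -- Walk from `x` along `-c` until the first coordinate vanishes.
  obtain ⟨j, hj, hmin⟩ := (s.filter (0 < c ·)).exists_min_image (fun i => x i / c i)
    (by obtain ⟨j, hjs, hcj⟩ := hpos; exact ⟨j, mem_filter.2 ⟨hjs, hcj⟩⟩)
  obtain ⟨hjs, hcj⟩ := mem_filter.1 hj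
  set t := x j / c j
  have ht : 0 ≤ t := div_nonneg (hx j hjs) hcj.le
  refine Set.mem_biUnion hjs ⟨x - t • c, fun i hi => ?_, ?_⟩
  · have his := mem_of_mem_erase hi
    rw [Pi.sub_apply, Pi.smul_apply, smul_eq_mul, sub_nonneg]
    by_cases hci : 0 < c i
    · exact (le_div_iff₀ hci).1 (hmin i (mem_filter.2 ⟨his, hci⟩))
    · exact (mul_nonpos_of_nonneg_of_nonpos ht (not_lt.1 hci)).trans (hx i his)
  · rw [sum_erase _ (by simp [t, hcj.ne'])]
    simp [sub_smul, sum_sub_distrib, mul_smul, ← smul_sum, hc]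

variable [TopologicalSpace E] [IsTopologicalAddGroup E] [ContinuousSMul ℝ E] [T2Space E]

theorem isClosed_nonnegCombinations_of_linearIndepOn {v : ι → E} {s : Finset ι}
    (h : LinearIndepOn ℝ v s) : IsClosed (nonnegCombinations v s) := by
  classical
  let L := Fintype.linearCombination ℝ fun i : s => v i
  have hL : nonnegCombinations v s = L '' Set.Ici 0 := by
    ext z
    constructor
    · rintro ⟨x, hx, rfl⟩
      refine ⟨fun i => x i, fun i => hx i i.2, ?_⟩
      simp [L, Fintype.linearCombination_apply, sum_attach s fun i => x i • v i]
    · rintro ⟨y, hy, rfl⟩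
      refine ⟨fun i => if hi : i ∈ s then y ⟨i, hi⟩ else 0,
        fun i hi => by simpa [hi] using hy ⟨i, hi⟩, ?_⟩
      rw [← sum_coe_sort]
      simp [L, Fintype.linearCombination_apply]
  rw [hL]
  exact (L.isClosedEmbedding_of_injective (LinearMap.ker_eq_bot.2
    (linearIndependent_iff_injective_fintypeLinearCombination.1 h))).isClosedMap _ isClosed_Ici

theorem isClosed_nonnegCombinations (v : ι → E) (s : Finset ι) :
    IsClosed (nonnegCombinations v s) := by
  classical
  induction s using Finset.strongInduction with
  | H s ih =>
    by_cases h : LinearIndepOn ℝ v s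
    · exact isClosed_nonnegCombinations_of_linearIndepOn h
    · have hs : nonnegCombinations v s = ⋃ j ∈ s, nonnegCombinations v (s.erase j) :=
        (nonnegCombinations_subset_biUnion_erase h).antisymm
          (Set.iUnion₂_subset fun j _ => nonnegCombinations_mono v (erase_subset j s))
      rw [hs]
      exact isClosed_biUnion_finset fun j hj => ih _ (erase_ssubset hj)

theorem exists_nonneg_sum_smul_eq_of_forall_nonneg [Fintype ι] [LocallyConvexSpace ℝ E]
    (v : ι → E) (b : E) (h : ∀ f : StrongDual ℝ E, (∀ i, 0 ≤ f (v i)) → 0 ≤ f b) :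
    ∃ x : ι → ℝ, 0 ≤ x ∧ ∑ i, x i • v i = b := by
  classical
  let K : ProperCone ℝ E :=
    { carrier := nonnegCombinations v univ
      add_mem' := by
        rintro _ _ ⟨x, hx, rfl⟩ ⟨y, hy, rfl⟩
        exact ⟨x + y, fun i hi => add_nonneg (hx i hi) (hy i hi),
          by simp [add_smul, sum_add_distrib]⟩
      zero_mem' := ⟨0, by simp, by simp⟩
      smul_mem' := by
        rintro r _ ⟨x, hx, rfl⟩
        exact ⟨(r : ℝ) • x, fun i hi => mul_nonneg r.2 (hx i hi), by simp [smul_sum, mul_smul]⟩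
      isClosed' := isClosed_nonnegCombinations v univ }
  by_contra hb
  obtain ⟨f, hfK, hfb⟩ := K.hyperplane_separation_point (x₀ := b)
    fun ⟨x, hx, hxb⟩ => hb ⟨x, fun i => hx i (mem_univ i), hxb⟩
  have hsingle (i : ι) : (0 : ι → ℝ) ≤ Pi.single i 1 := Pi.single_nonneg.2 zero_le_one
  exact hfb.not_ge (h f fun i => hfK _ ⟨_, fun j _ => hsingle i j, by simp [Pi.single_apply]⟩)

end Cone

namespace Matrix

variable {ι κ : Type*} [Fintype ι]

theorem exists_vecMul_le_of_forall_nonneg [Fintype κ] (M : Matrix κ ι ℝ) (q : ι → ℝ)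
    (h : ∀ x, 0 ≤ x → M *ᵥ x = 0 → 0 ≤ q ⬝ᵥ x) : ∃ y, y ᵥ* M ≤ q := by
  classical
  let v := Sum.elim (Sum.elim (fun k => M k) fun k => -M k) fun i => Pi.single i (1 : ℝ)
  have hv (f : StrongDual ℝ (ι → ℝ)) (hf : ∀ j, 0 ≤ f (v j)) : 0 ≤ f q := by
    have hrep (u : ι → ℝ) : f u = u ⬝ᵥ fun i => f (Pi.single i 1) := by
      conv_lhs => rw [← univ_sum_single u]
      rw [map_sum, dotProduct]
      refine sum_congr rfl fun i _ => ?_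
      rw [← smul_eq_mul, ← map_smul, ← Pi.single_smul', smul_eq_mul, mul_one]
    rw [hrep]
    refine h _ (fun i => by simpa [v] using hf (.inr i)) (funext fun k => ?_)
    have h₁ := hf (.inl (.inl k))
    have h₂ := hf (.inl (.inr k))
    simp only [v, Sum.elim_inl, Sum.elim_inr, map_neg, neg_nonneg] at h₁ h₂
    rw [hrep] at h₁ h₂
    simpa [mulVec, dotProduct_comm] using le_antisymm h₂ h₁
  obtain ⟨z, hz, hzq⟩ := exists_nonneg_sum_smul_eq_of_forall_nonneg v q hv
  refine ⟨fun k => z (.inl (.inl k)) - z (.inl (.inr k)), fun i => ?_⟩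
  have hi := congr_fun hzq i
  simp only [Finset.sum_apply, Pi.smul_apply, smul_eq_mul, Fintype.sum_sum_type, Sum.elim_inl,
    Sum.elim_inr, Pi.neg_apply, mul_neg, sum_neg_distrib, Pi.single_apply, mul_ite, mul_one,
    mul_zero, sum_ite_eq, mem_univ, ↓reduceIte, v] at hi
  simp only [vecMul, dotProduct, sub_mul, sum_sub_distrib, tsub_le_iff_right]
  linarith [show 0 ≤ z (.inr i) from hz _]

variable (A : Matrix κ ι ℝ) (b : κ → ℝ) (c : ι → ℝ)

theorem dotProduct_le_dotProduct_of_vecMul_le [Fintype κ] {x : ι → ℝ} {y : κ → ℝ} (hx : 0 ≤ x)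
    (hAx : A *ᵥ x = b) (hy : y ᵥ* A ≤ c) : b ⬝ᵥ y ≤ c ⬝ᵥ x := by
  rw [← hAx, dotProduct_comm, dotProduct_mulVec]
  exact dotProduct_le_dotProduct_of_nonneg_right hy hx

theorem mul_le_dotProduct_of_mulVec_eq_smul {x₀ : ι → ℝ} {W : ℝ} (hx₀ : 0 ≤ x₀)
    (hAx₀ : A *ᵥ x₀ = b) (hW : ∀ x, 0 ≤ x → A *ᵥ x = b → W ≤ c ⬝ᵥ x)
    {x : ι → ℝ} {t : ℝ} (hx : 0 ≤ x) (ht : 0 ≤ t) (hAx : A *ᵥ x = t • b) :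
    t * W ≤ c ⬝ᵥ x := by
  rcases ht.eq_or_lt with rfl | ht
  · -- `x` is a recession direction, so `c ⬝ᵥ x < 0` would make the primal unbounded below.
    by_contra! hneg
    rw [zero_mul] at hneg
    have hgap : 0 ≤ c ⬝ᵥ x₀ - W := sub_nonneg.2 (hW x₀ hx₀ hAx₀)
    set s := (c ⬝ᵥ x₀ - W + 1) / -(c ⬝ᵥ x)
    have hs : s * (c ⬝ᵥ x) = -(c ⬝ᵥ x₀ - W + 1) := by
      simp only [s]
      field_simp [hneg.ne]
    have hs₀ : 0 ≤ s := div_nonneg (by linarith) (by linarith)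
    have := hW (x₀ + s • x) (add_nonneg hx₀ (smul_nonneg hs₀ hx))
      (by simp [mulVec_add, mulVec_smul, hAx, hAx₀])
    rw [dotProduct_add, dotProduct_smul, smul_eq_mul] at this
    linarith
  · have := hW (t⁻¹ • x) (smul_nonneg (inv_nonneg.2 ht.le) hx)
      (by rw [mulVec_smul, hAx, smul_smul, inv_mul_cancel₀ ht.ne', one_smul])
    rw [dotProduct_smul, smul_eq_mul, le_inv_mul_iff₀ ht] at this
    exact this

theorem exists_vecMul_le_and_le_dotProduct [Fintype κ] {x₀ : ι → ℝ} {W : ℝ} (hx₀ : 0 ≤ x₀)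
    (hAx₀ : A *ᵥ x₀ = b) (hW : ∀ x, 0 ≤ x → A *ᵥ x = b → W ≤ c ⬝ᵥ x) :
    ∃ y, y ᵥ* A ≤ c ∧ W ≤ b ⬝ᵥ y := by
  -- Homogenize: a `y` with `y ᵥ* [A | -b] ≤ (c, -W)` is dual feasible with `W ≤ b ⬝ᵥ y`.
  obtain ⟨y, hy⟩ := exists_vecMul_le_of_forall_nonneg (fromCols A (replicateCol Unit (-b)))
    (Sum.elim c fun _ => -W) fun x hx hMx => by
      have hAx : A *ᵥ (x ∘ Sum.inl) = x (.inr ()) • b := by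
        rw [fromCols_mulVec, add_eq_zero_iff_eq_neg] at hMx
        rw [hMx]
        ext k
        simp [mulVec, dotProduct, replicateCol, mul_comm]
      have := mul_le_dotProduct_of_mulVec_eq_smul A b c hx₀ hAx₀ hW
        (fun i => hx (.inl i)) (hx (.inr ())) hAx
      simp only [dotProduct, Fintype.sum_sum_type, Sum.elim_inl, univ_unique,
        PUnit.default_eq_unit, Sum.elim_inr, neg_mul, sum_neg_distrib, sum_singleton] at this ⊢
      linarith
  rw [vecMul_fromCols] at hy
  refine ⟨y, fun i => hy (.inl i), ?_⟩
  have hb := hy (.inr ())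
  simp only [replicateCol, Pi.neg_apply, Sum.elim_inr, vecMul, dotProduct, of_apply, mul_neg,
    sum_neg_distrib, neg_le_neg_iff] at hb
  simpa [dotProduct, mul_comm] using hb

theorem isGreatest_dual_sInf_primal [Fintype κ] {x₀ y₀} (hx₀ : 0 ≤ x₀) (hAx₀ : A *ᵥ x₀ = b)
    (hy₀ : y₀ ᵥ* A ≤ c) :
    IsGreatest {v | ∃ y, y ᵥ* A ≤ c ∧ v = b ⬝ᵥ y}
      (sInf {v | ∃ x ∈ {x | 0 ≤ x ∧ A *ᵥ x = b}, v = c ⬝ᵥ x}) := by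
  set S := {v | ∃ x ∈ {x | 0 ≤ x ∧ A *ᵥ x = b}, v = c ⬝ᵥ x}
  have hS : S.Nonempty := ⟨_, x₀, ⟨hx₀, hAx₀⟩, rfl⟩
  have hweak (y) (hy : y ᵥ* A ≤ c) : b ⬝ᵥ y ∈ lowerBounds S := by
    rintro v ⟨x, ⟨hx, hAx⟩, rfl⟩
    exact dotProduct_le_dotProduct_of_vecMul_le A b c hx hAx hy
  obtain ⟨y, hy, hW⟩ := exists_vecMul_le_and_le_dotProduct A b c hx₀ hAx₀ (W := sInf S)
    fun x hx hAx => csInf_le ⟨_, hweak y₀ hy₀⟩ ⟨x, ⟨hx, hAx⟩, rfl⟩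
  refine ⟨⟨y, hy, le_antisymm hW (le_csInf hS (hweak y hy))⟩, ?_⟩
  rintro v ⟨y, hy, rfl⟩
  exact le_csInf hS (hweak y hy)

end Matrix

section Transport

open Matrix

variable {α β : Type*} [Fintype α] [Fintype β] [DecidableEq α] [DecidableEq β]

variable (α β) in
def marginalMatrix : Matrix (α ⊕ β) (α × β) ℝ :=
  fromRows (of fun i p => if i = p.1 then 1 else 0) (of fun j p => if j = p.2 then 1 else 0)

theorem marginalMatrix_mulVec (x : α × β → ℝ) :
    marginalMatrix α β *ᵥ x = Sum.elim (fun i => ∑ j, x (i, j)) (fun j => ∑ i, x (i, j)) := by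
  ext (i | j)
  · simp [marginalMatrix, mulVec, dotProduct, Fintype.sum_prod_type_right]
  · simp [marginalMatrix, mulVec, dotProduct, Fintype.sum_prod_type]

theorem vecMul_marginalMatrix (y : α ⊕ β → ℝ) :
    y ᵥ* marginalMatrix α β = fun p => y (.inl p.1) + y (.inr p.2) := by
  ext p
  simp [marginalMatrix, vecMul, dotProduct]

theorem mem_couplings_iff {n m : ℕ} {a : Fin n → ℝ} {b : Fin m → ℝ}
    {P : Matrix (Fin n) (Fin m) ℝ} :
    P ∈ couplings a b ↔ 0 ≤ Function.uncurry P ∧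
      marginalMatrix (Fin n) (Fin m) *ᵥ Function.uncurry P = Sum.elim a b := by
  simp [couplings, marginalMatrix_mulVec, Pi.le_def, funext_iff, Function.uncurry]

theorem dotp_eq_dotProduct {n m : ℕ} (P C : Matrix (Fin n) (Fin m) ℝ) :
    dotp P C = Function.uncurry C ⬝ᵥ Function.uncurry P := by
  simp [dotp, dotProduct, Fintype.sum_prod_type, Function.uncurry, mul_comm]

theorem vecMulVec_mem_couplings_s7 {n m : ℕ} {a : Fin n → ℝ} {b : Fin m → ℝ}
    (ha : (∀ i, 0 ≤ a i) ∧ ∑ i, a i = 1) (hb : (∀ j, 0 ≤ b j) ∧ ∑ j, b j = 1) :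
    vecMulVec a b ∈ couplings a b :=
  ⟨fun i j => mul_nonneg (ha.1 i) (hb.1 j), fun i => by simp [vecMulVec_apply, ← mul_sum, hb.2],
    fun j => by simp [vecMulVec_apply, ← sum_mul, ha.2]⟩

theorem setOf_dotp_couplings_eq {n m : ℕ} (a : Fin n → ℝ) (b : Fin m → ℝ)
    (C : Matrix (Fin n) (Fin m) ℝ) :
    {v | ∃ P ∈ couplings a b, v = dotp P C} =
      {v | ∃ x ∈ {x | 0 ≤ x ∧ marginalMatrix (Fin n) (Fin m) *ᵥ x = Sum.elim a b},
        v = Function.uncurry C ⬝ᵥ x} := by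
  ext v
  constructor
  · rintro ⟨P, hP, rfl⟩
    exact ⟨_, mem_couplings_iff.1 hP, dotp_eq_dotProduct P C⟩
  · rintro ⟨x, hx, rfl⟩
    exact ⟨Function.curry x, mem_couplings_iff.2 hx,
      (dotp_eq_dotProduct (Function.curry x) C).symm⟩

theorem setOf_potentials_eq {n m : ℕ} (a : Fin n → ℝ) (b : Fin m → ℝ)
    (C : Matrix (Fin n) (Fin m) ℝ) :
    {v | ∃ (f : Fin n → ℝ) (g : Fin m → ℝ),
        (∀ i j, f i + g j ≤ C i j) ∧ v = ∑ i, f i * a i + ∑ j, g j * b j} =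
      {v | ∃ y, y ᵥ* marginalMatrix (Fin n) (Fin m) ≤ Function.uncurry C ∧
        v = Sum.elim a b ⬝ᵥ y} := by
  ext v
  constructor
  · rintro ⟨f, g, hfg, rfl⟩
    refine ⟨Sum.elim f g, fun p => by rw [vecMul_marginalMatrix]; exact hfg p.1 p.2, ?_⟩
    simp [dotProduct, mul_comm]
  · rintro ⟨y, hy, rfl⟩
    refine ⟨y ∘ .inl, y ∘ .inr, fun i j => by
      have hij := hy (i, j)
      rw [vecMul_marginalMatrix] at hij
      exact hij, ?_⟩
    simp [dotProduct, Fintype.sum_sum_type, mul_comm]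

theorem exists_vecMul_marginalMatrix_le (c : α × β → ℝ) : ∃ y, y ᵥ* marginalMatrix α β ≤ c := by
  refine ⟨fun _ => -∑ q, |c q|, fun p => ?_⟩
  have := single_le_sum (fun q _ => abs_nonneg (c q)) (mem_univ p)
  simp only [vecMul_marginalMatrix]
  linarith [neg_abs_le (c p), abs_nonneg (c p)]

end Transport

theorem stmt7 {n m : ℕ} (a : Fin n → ℝ) (b : Fin m → ℝ)
    (ha : (∀ i, 0 ≤ a i) ∧ ∑ i, a i = 1) (hb : (∀ j, 0 ≤ b j) ∧ ∑ j, b j = 1)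
    (C : Matrix (Fin n) (Fin m) ℝ) :
    IsGreatest
      {v | ∃ (f : Fin n → ℝ) (g : Fin m → ℝ),
        (∀ i j, f i + g j ≤ C i j) ∧ v = ∑ i, f i * a i + ∑ j, g j * b j}
      (W0 C a b) := by
  obtain ⟨hx₀, hAx₀⟩ := mem_couplings_iff.1 (vecMulVec_mem_couplings_s7 ha hb)
  obtain ⟨y₀, hy₀⟩ := exists_vecMul_marginalMatrix_le (Function.uncurry C)
  rw [setOf_potentials_eq, W0, setOf_dotp_couplings_eq]
  exact Matrix.isGreatest_dual_sInf_primal _ _ _ hx₀ hAx₀ hy₀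
end

section
/- For ε > 0, the function (f,g) ↦ −min_ε(C − f ⊕ g) = ε log ∑_{i,j} e^{(f_i + g_j − C_{ij})/ε} is smooth (C^∞) and its gradient is 2/ε-Lipschitz on ℝ^n × ℝ^m. -/
open Finset Real

/-- The product `ℝ^n × ℝ^m` with the Euclidean (ℓ²) norm. -/
noncomputable abbrev E2 (n m : ℕ) :=
  WithLp 2 (EuclideanSpace ℝ (Fin n) × EuclideanSpace ℝ (Fin m))

namespace Stmt11Aux

open RealInnerProductSpace

variable {n m : ℕ}

noncomputable def vv (q : Fin n × Fin m) : E2 n m :=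
  (WithLp.equiv 2 _).symm (EuclideanSpace.single q.1 (1:ℝ), EuclideanSpace.single q.2 (1:ℝ))

lemma inner_vv (q : Fin n × Fin m) (x : E2 n m) :
    ⟪vv q, x⟫ = (WithLp.equiv 2 _ x).1 q.1 + (WithLp.equiv 2 _ x).2 q.2 := by
  simp [vv, WithLp.prod_inner_apply, EuclideanSpace.inner_single_left]

variable (C : Matrix (Fin n) (Fin m) ℝ) (ε : ℝ)

noncomputable def ee (x : E2 n m) (q : Fin n × Fin m) : ℝ :=
  Real.exp ((⟪vv q, x⟫ - C q.1 q.2) / ε)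

noncomputable def SS (x : E2 n m) : ℝ := ∑ q, ee C ε x q

noncomputable def FF (x : E2 n m) : ℝ := ε * Real.log (SS C ε x)

noncomputable def pp (x : E2 n m) (q : Fin n × Fin m) : ℝ := ee C ε x q / SS C ε x

noncomputable def GG (x : E2 n m) : E2 n m := ∑ q, pp C ε x q • vv q

instance instCSE2 : ContinuousSMul ℝ (E2 n m) := IsBoundedSMul.continuousSMul

noncomputable def HH (x : E2 n m) : E2 n m →L[ℝ] E2 n m :=
  ∑ q, ((pp C ε x q / ε) • innerSL ℝ (vv q - GG C ε x)).smulRight (vv q)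

lemma ee_pos (x : E2 n m) (q : Fin n × Fin m) : 0 < ee C ε x q := Real.exp_pos _

lemma SS_pos [Nonempty (Fin n)] [Nonempty (Fin m)] (x : E2 n m) : 0 < SS C ε x :=
  Finset.sum_pos (fun q _ => ee_pos C ε x q) univ_nonempty

lemma pp_nonneg (x : E2 n m) (q : Fin n × Fin m) : 0 ≤ pp C ε x q :=
  div_nonneg (ee_pos C ε x q).le (Finset.sum_nonneg fun r _ => (ee_pos C ε x r).le)

lemma sum_pp [Nonempty (Fin n)] [Nonempty (Fin m)] (x : E2 n m) :
    ∑ q, pp C ε x q = 1 := by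
  unfold pp
  rw [← Finset.sum_div]
  rw [show (∑ q, ee C ε x q) = SS C ε x from rfl, div_self (SS_pos C ε x).ne']

lemma inner_GG (x u : E2 n m) : ⟪GG C ε x, u⟫ = ∑ q, pp C ε x q * ⟪vv q, u⟫ := by
  unfold GG
  rw [sum_inner]
  exact Finset.sum_congr rfl fun q _ => real_inner_smul_left _ _ _

lemma hasFDerivAt_ee (x : E2 n m) (q : Fin n × Fin m) :
    HasFDerivAt (fun y => ee C ε y q) ((ee C ε x q / ε) • innerSL ℝ (vv q)) x := by
  have h1 : HasFDerivAt (fun y : E2 n m => (⟪vv q, y⟫ - C q.1 q.2) / ε)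
      (ε⁻¹ • innerSL ℝ (vv q)) x := by
    have h0 : HasFDerivAt (fun y : E2 n m => ⟪vv q, y⟫) (innerSL ℝ (vv q)) x :=
      (innerSL ℝ (vv q)).hasFDerivAt
    have h2 := (h0.sub_const (C q.1 q.2)).const_mul ε⁻¹
    have hfe : (fun y : E2 n m => (⟪vv q, y⟫ - C q.1 q.2) / ε)
        = fun y => ε⁻¹ * (⟪vv q, y⟫ - C q.1 q.2) := by
      funext y; rw [div_eq_inv_mul]
    rw [hfe]
    simpa using h2
  have := h1.exp
  unfold ee
  refine this.congr_fderiv (Eq.symm ?_)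
  rw [smul_smul, div_eq_mul_inv]

lemma hasFDerivAt_SS (x : E2 n m) :
    HasFDerivAt (SS C ε) (∑ q, (ee C ε x q / ε) • innerSL ℝ (vv q)) x := by
  unfold SS
  exact HasFDerivAt.fun_sum fun q _ => hasFDerivAt_ee C ε x q

lemma hasGradientAt_FF [Nonempty (Fin n)] [Nonempty (Fin m)] (hε : 0 < ε) (x : E2 n m) :
    HasGradientAt (FF C ε) (GG C ε x) x := by
  rw [hasGradientAt_iff_hasFDerivAt]
  have hS := SS_pos C ε x
  have hlog := ((hasFDerivAt_SS C ε x).log hS.ne').const_mul ε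
  have : FF C ε = fun y => ε * Real.log (SS C ε y) := rfl
  rw [this]
  refine hlog.congr_fderiv (Eq.symm ?_)
  refine ContinuousLinearMap.ext fun u => ?_
  rw [InnerProductSpace.toDual_apply_apply, inner_GG]
  simp only [ContinuousLinearMap.smul_apply, ContinuousLinearMap.coe_sum',
    Finset.sum_apply, innerSL_apply_apply, smul_eq_mul]
  rw [Finset.mul_sum, Finset.mul_sum]
  refine Finset.sum_congr rfl fun q _ => ?_
  unfold pp
  field_simp

lemma hasFDerivAt_pp [Nonempty (Fin n)] [Nonempty (Fin m)] (hε : 0 < ε) (x : E2 n m)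
    (q : Fin n × Fin m) :
    HasFDerivAt (fun y => pp C ε y q)
      ((pp C ε x q / ε) • innerSL ℝ (vv q - GG C ε x)) x := by
  have hS := SS_pos C ε x
  have hinv : HasFDerivAt (fun y => (SS C ε y)⁻¹)
      ((-(SS C ε x ^ 2)⁻¹) • (∑ r, (ee C ε x r / ε) • innerSL ℝ (vv r))) x :=
    (hasDerivAt_inv hS.ne').comp_hasFDerivAt x (hasFDerivAt_SS C ε x)
  have h := (hasFDerivAt_ee C ε x q).mul hinv
  have hfun : (fun y => pp C ε y q) = fun y => ee C ε y q * (SS C ε y)⁻¹ := by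
    funext y; rw [pp, div_eq_mul_inv]
  rw [hfun]
  refine h.congr_fderiv (Eq.symm ?_)
  refine ContinuousLinearMap.ext fun u => ?_
  simp only [ContinuousLinearMap.smul_apply, ContinuousLinearMap.add_apply,
    ContinuousLinearMap.coe_sum', Finset.sum_apply, innerSL_apply_apply, smul_eq_mul,
    inner_sub_left]
  rw [inner_GG]
  have hsum1 : ∑ r, pp C ε x r * ⟪vv r, u⟫ = (∑ r, ee C ε x r * ⟪vv r, u⟫) / SS C ε x := by
    rw [Finset.sum_div]
    exact Finset.sum_congr rfl fun r _ => by rw [pp, div_mul_eq_mul_div]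
  have hsum2 : ∑ r, ee C ε x r / ε * ⟪vv r, u⟫ = (∑ r, ee C ε x r * ⟪vv r, u⟫) / ε := by
    rw [Finset.sum_div]
    exact Finset.sum_congr rfl fun r _ => by rw [div_mul_eq_mul_div]
  rw [hsum1, hsum2, pp]
  field_simp
  ring

lemma hasFDerivAt_GG [Nonempty (Fin n)] [Nonempty (Fin m)] (hε : 0 < ε) (x : E2 n m) :
    HasFDerivAt (GG C ε) (HH C ε x) x := by
  have : GG C ε = fun y => ∑ q, pp C ε y q • vv q := rfl
  rw [this]
  exact HasFDerivAt.fun_sum fun q _ => (hasFDerivAt_pp C ε hε x q).smul_const (vv q)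

lemma HH_inner (x u w : E2 n m) :
    ⟪(HH C ε x) u, w⟫ =
      ((∑ q, pp C ε x q * (⟪vv q, u⟫ * ⟪vv q, w⟫))
        - (∑ q, pp C ε x q * ⟪vv q, u⟫) * (∑ q, pp C ε x q * ⟪vv q, w⟫)) / ε := by
  have happ : (HH C ε x) u
      = ∑ q, ((pp C ε x q / ε) * (⟪vv q, u⟫ - ⟪GG C ε x, u⟫)) • vv q := by
    unfold HH
    simp only [ContinuousLinearMap.coe_sum', Finset.sum_apply,
      ContinuousLinearMap.smulRight_apply, ContinuousLinearMap.smul_apply,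
      innerSL_apply_apply, smul_eq_mul, inner_sub_left]
  rw [happ, sum_inner]
  have : ∀ q ∈ (univ : Finset (Fin n × Fin m)),
      ⟪((pp C ε x q / ε) * (⟪vv q, u⟫ - ⟪GG C ε x, u⟫)) • vv q, w⟫
        = pp C ε x q * (⟪vv q, u⟫ * ⟪vv q, w⟫) / ε
          - (∑ r, pp C ε x r * ⟪vv r, u⟫) * (pp C ε x q * ⟪vv q, w⟫) / ε := by
    intro q _
    rw [real_inner_smul_left, inner_GG]
    ring
  rw [Finset.sum_congr rfl this, Finset.sum_sub_distrib, ← Finset.sum_div,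
    ← Finset.sum_div, ← Finset.mul_sum, div_sub_div_same]

lemma HH_symm (x u w : E2 n m) : ⟪(HH C ε x) u, w⟫ = ⟪(HH C ε x) w, u⟫ := by
  rw [HH_inner, HH_inner]
  have h1 : ∑ q, pp C ε x q * (⟪vv q, u⟫ * ⟪vv q, w⟫)
      = ∑ q, pp C ε x q * (⟪vv q, w⟫ * ⟪vv q, u⟫) :=
    Finset.sum_congr rfl fun q _ => by ring
  rw [h1, mul_comm (∑ q, pp C ε x q * ⟪vv q, u⟫)]

lemma HH_pos [Nonempty (Fin n)] [Nonempty (Fin m)] (hε : 0 < ε) (x u : E2 n m) :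
    0 ≤ ⟪(HH C ε x) u, u⟫ := by
  rw [HH_inner]
  apply div_nonneg _ hε.le
  rw [sub_nonneg]
  have key := Finset.sum_mul_sq_le_sq_mul_sq univ
    (fun q => Real.sqrt (pp C ε x q)) (fun q => Real.sqrt (pp C ε x q) * ⟪vv q, u⟫)
  have h1 : ∀ q ∈ (univ : Finset (Fin n × Fin m)),
      Real.sqrt (pp C ε x q) * (Real.sqrt (pp C ε x q) * ⟪vv q, u⟫)
        = pp C ε x q * ⟪vv q, u⟫ := by
    intro q _
    rw [← mul_assoc, Real.mul_self_sqrt (pp_nonneg C ε x q)]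
  have h2 : ∀ q ∈ (univ : Finset (Fin n × Fin m)),
      Real.sqrt (pp C ε x q) ^ 2 = pp C ε x q := fun q _ =>
    Real.sq_sqrt (pp_nonneg C ε x q)
  have h3 : ∀ q ∈ (univ : Finset (Fin n × Fin m)),
      (Real.sqrt (pp C ε x q) * ⟪vv q, u⟫) ^ 2
        = pp C ε x q * (⟪vv q, u⟫ * ⟪vv q, u⟫) := by
    intro q _
    rw [mul_pow, Real.sq_sqrt (pp_nonneg C ε x q), sq]
  rw [Finset.sum_congr rfl h1, Finset.sum_congr rfl h2, Finset.sum_congr rfl h3,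
    sum_pp C ε x, one_mul] at key
  calc (∑ q, pp C ε x q * ⟪vv q, u⟫) * (∑ q, pp C ε x q * ⟪vv q, u⟫)
      = (∑ q, pp C ε x q * ⟪vv q, u⟫) ^ 2 := (sq _).symm
    _ ≤ ∑ q, pp C ε x q * (⟪vv q, u⟫ * ⟪vv q, u⟫) := key

lemma norm_sq_E2 (u : E2 n m) :
    (∑ i, ((WithLp.equiv 2 _ u).1 i) ^ 2) + (∑ j, ((WithLp.equiv 2 _ u).2 j) ^ 2)
      = ‖u‖ ^ 2 := by
  rw [← real_inner_self_eq_norm_sq, WithLp.prod_inner_apply, PiLp.inner_apply,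
    PiLp.inner_apply]
  simp [sq, RCLike.inner_apply]

lemma HH_quad_le [Nonempty (Fin n)] [Nonempty (Fin m)] (hε : 0 < ε) (x u : E2 n m) :
    ⟪(HH C ε x) u, u⟫ ≤ 2 / ε * ‖u‖ ^ 2 := by
  rw [HH_inner]
  set a : Fin n × Fin m → ℝ := fun q => ⟪vv q, u⟫ with ha
  have hsq : 0 ≤ (∑ q, pp C ε x q * a q) * (∑ q, pp C ε x q * a q) := mul_self_nonneg _
  have hrow : ∀ i : Fin n, ∑ j, pp C ε x (i, j) ≤ 1 := by
    intro i
    rw [← sum_pp C ε x, Fintype.sum_prod_type]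
    exact Finset.single_le_sum
      (f := fun i' => ∑ j, pp C ε x (i', j))
      (fun i' _ => Finset.sum_nonneg fun j _ => pp_nonneg C ε x _) (mem_univ i)
  have hcol : ∀ j : Fin m, ∑ i, pp C ε x (i, j) ≤ 1 := by
    intro j
    rw [← sum_pp C ε x, Fintype.sum_prod_type_right]
    exact Finset.single_le_sum
      (f := fun j' => ∑ i, pp C ε x (i, j'))
      (fun j' _ => Finset.sum_nonneg fun i _ => pp_nonneg C ε x _) (mem_univ j)
  set u1 : Fin n → ℝ := fun i => (WithLp.equiv 2 _ u).1 i with hu1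
  set u2 : Fin m → ℝ := fun j => (WithLp.equiv 2 _ u).2 j with hu2
  have hbound : ∑ q, pp C ε x q * (a q * a q) ≤ 2 * ‖u‖ ^ 2 := by
    have step1 : ∑ q, pp C ε x q * (a q * a q)
        ≤ ∑ q : Fin n × Fin m, pp C ε x q * (2 * u1 q.1 ^ 2 + 2 * u2 q.2 ^ 2) := by
      refine Finset.sum_le_sum fun q _ => ?_
      refine mul_le_mul_of_nonneg_left ?_ (pp_nonneg C ε x q)
      have : a q = u1 q.1 + u2 q.2 := inner_vv q u
      rw [this]
      nlinarith [sq_nonneg (u1 q.1 - u2 q.2)]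
    have step2 : ∑ q : Fin n × Fin m, pp C ε x q * (2 * u1 q.1 ^ 2 + 2 * u2 q.2 ^ 2)
        = 2 * (∑ q : Fin n × Fin m, pp C ε x q * u1 q.1 ^ 2)
          + 2 * (∑ q : Fin n × Fin m, pp C ε x q * u2 q.2 ^ 2) := by
      rw [Finset.mul_sum, Finset.mul_sum, ← Finset.sum_add_distrib]
      exact Finset.sum_congr rfl fun q _ => by ring
    have step3 : ∑ q : Fin n × Fin m, pp C ε x q * u1 q.1 ^ 2 ≤ ∑ i, u1 i ^ 2 := by
      rw [Fintype.sum_prod_type]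
      calc ∑ i, ∑ j, pp C ε x (i, j) * u1 i ^ 2
          = ∑ i, (∑ j, pp C ε x (i, j)) * u1 i ^ 2 := by
            exact Finset.sum_congr rfl fun i _ => (Finset.sum_mul _ _ _).symm
        _ ≤ ∑ i, 1 * u1 i ^ 2 := Finset.sum_le_sum fun i _ =>
            mul_le_mul_of_nonneg_right (hrow i) (sq_nonneg _)
        _ = ∑ i, u1 i ^ 2 := by simp
    have step4 : ∑ q : Fin n × Fin m, pp C ε x q * u2 q.2 ^ 2 ≤ ∑ j, u2 j ^ 2 := by
      rw [Fintype.sum_prod_type_right]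
      calc ∑ j, ∑ i, pp C ε x (i, j) * u2 j ^ 2
          = ∑ j, (∑ i, pp C ε x (i, j)) * u2 j ^ 2 := by
            exact Finset.sum_congr rfl fun j _ => (Finset.sum_mul _ _ _).symm
        _ ≤ ∑ j, 1 * u2 j ^ 2 := Finset.sum_le_sum fun j _ =>
            mul_le_mul_of_nonneg_right (hcol j) (sq_nonneg _)
        _ = ∑ j, u2 j ^ 2 := by simp
    have hnorm : (∑ i, u1 i ^ 2) + (∑ j, u2 j ^ 2) = ‖u‖ ^ 2 := norm_sq_E2 u
    nlinarith [step1, step2, step3, step4]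
  have hε' : 0 < ε := hε
  calc ((∑ q, pp C ε x q * (a q * a q))
        - (∑ q, pp C ε x q * a q) * (∑ q, pp C ε x q * a q)) / ε
      ≤ (∑ q, pp C ε x q * (a q * a q)) / ε := by
        gcongr
        linarith
    _ ≤ (2 * ‖u‖ ^ 2) / ε := by gcongr
    _ = 2 / ε * ‖u‖ ^ 2 := by ring

lemma HH_norm_le [Nonempty (Fin n)] [Nonempty (Fin m)] (hε : 0 < ε) (x : E2 n m) :
    ‖HH C ε x‖ ≤ 2 / ε := by
  have hK : (0:ℝ) ≤ 2 / ε := by positivity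
  refine ContinuousLinearMap.opNorm_le_bound _ hK fun u => ?_
  -- first: bilinear bound
  have hBle : ∀ w : E2 n m, ⟪(HH C ε x) u, w⟫ ≤ 2 / ε * ‖u‖ * ‖w‖ := by
    intro w
    have hexp : ∀ t : ℝ, 0 ≤ ⟪(HH C ε x) w, w⟫ * (t * t)
        + (2 * ⟪(HH C ε x) u, w⟫) * t + ⟪(HH C ε x) u, u⟫ := by
      intro t
      have h0 := HH_pos C ε hε x (u + t • w)
      have hlin : ⟪(HH C ε x) (u + t • w), u + t • w⟫
          = ⟪(HH C ε x) w, w⟫ * (t * t)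
            + (2 * ⟪(HH C ε x) u, w⟫) * t + ⟪(HH C ε x) u, u⟫ := by
        rw [map_add, map_smul]
        simp only [inner_add_left, inner_add_right, real_inner_smul_left,
          real_inner_smul_right]
        rw [HH_symm C ε x w u]
        ring
      linarith [hlin ▸ h0]
    have hd := discrim_le_zero hexp
    rw [discrim] at hd
    have hBuu := HH_quad_le C ε hε x u
    have hBww := HH_quad_le C ε hε x w
    have hBuu0 := HH_pos C ε hε x u
    have hBww0 := HH_pos C ε hε x w
    have hnu := norm_nonneg u
    have hnw := norm_nonneg w
    have hsq : ⟪(HH C ε x) u, w⟫ ^ 2 ≤ (2 / ε * ‖u‖ * ‖w‖) ^ 2 := by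
      have h1 : ⟪(HH C ε x) u, w⟫ ^ 2 ≤ ⟪(HH C ε x) u, u⟫ * ⟪(HH C ε x) w, w⟫ := by
        nlinarith
      calc ⟪(HH C ε x) u, w⟫ ^ 2 ≤ ⟪(HH C ε x) u, u⟫ * ⟪(HH C ε x) w, w⟫ := h1
        _ ≤ (2 / ε * ‖u‖ ^ 2) * (2 / ε * ‖w‖ ^ 2) := by
            apply mul_le_mul hBuu hBww hBww0 (by positivity)
        _ = (2 / ε * ‖u‖ * ‖w‖) ^ 2 := by ring
    have hR : 0 ≤ 2 / ε * ‖u‖ * ‖w‖ := by positivity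
    nlinarith [hsq, hR]
  by_cases h0 : ‖(HH C ε x) u‖ = 0
  · rw [h0]; positivity
  · have hpos : 0 < ‖(HH C ε x) u‖ := lt_of_le_of_ne (norm_nonneg _) (Ne.symm h0)
    have := hBle ((HH C ε x) u)
    rw [real_inner_self_eq_norm_sq] at this
    nlinarith

lemma contDiff_FF [Nonempty (Fin n)] [Nonempty (Fin m)] (hε : 0 < ε) :
    ContDiff ℝ (⊤ : ℕ∞) (FF C ε) := by
  have hSc : ContDiff ℝ (⊤ : ℕ∞) (SS C ε) := by
    have : SS C ε = fun x => ∑ q : Fin n × Fin m,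
        Real.exp (((innerSL ℝ (vv q)) x - C q.1 q.2) / ε) := rfl
    rw [this]
    exact ContDiff.sum fun q _ =>
      ((((innerSL ℝ (vv q)).contDiff).sub contDiff_const).div_const ε).exp
  rw [contDiff_iff_contDiffAt]
  intro x
  have hlog : ContDiffAt ℝ (⊤ : ℕ∞) (fun y => Real.log (SS C ε y)) x :=
    (Real.contDiffAt_log.mpr (SS_pos C ε x).ne').comp x hSc.contDiffAt
  exact contDiffAt_const.mul hlog

end Stmt11Aux

open Stmt11Aux RealInnerProductSpace in
theorem stmt11 {n m : ℕ} (C : Matrix (Fin n) (Fin m) ℝ) (ε : ℝ) (hε : 0 < ε) :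
    ContDiff ℝ (⊤ : ℕ∞)
      (fun x : E2 n m =>
        ε * Real.log (∑ i, ∑ j,
          Real.exp (((WithLp.equiv 2 _ x).1 i + (WithLp.equiv 2 _ x).2 j - C i j) / ε)))
    ∧ LipschitzWith (Real.toNNReal (2 / ε))
      (fun x : E2 n m => gradient
        (fun y : E2 n m =>
          ε * Real.log (∑ i, ∑ j,
            Real.exp (((WithLp.equiv 2 _ y).1 i + (WithLp.equiv 2 _ y).2 j - C i j) / ε))) x) := by
  rcases Nat.eq_zero_or_pos n with rfl | hn
  · have hfun : (fun x : E2 0 m =>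
        ε * Real.log (∑ i, ∑ j,
          Real.exp (((WithLp.equiv 2 _ x).1 i + (WithLp.equiv 2 _ x).2 j - C i j) / ε)))
        = fun _ => (0:ℝ) := by
      funext x
      simp
    rw [hfun]
    refine ⟨contDiff_const, ?_⟩
    simp only [gradient_fun_const]
    exact (LipschitzWith.const _).weaken zero_le
  rcases Nat.eq_zero_or_pos m with rfl | hm
  · have hfun : (fun x : E2 n 0 =>
        ε * Real.log (∑ i, ∑ j,
          Real.exp (((WithLp.equiv 2 _ x).1 i + (WithLp.equiv 2 _ x).2 j - C i j) / ε)))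
        = fun _ => (0:ℝ) := by
      funext x
      simp
    rw [hfun]
    refine ⟨contDiff_const, ?_⟩
    simp only [gradient_fun_const]
    exact (LipschitzWith.const _).weaken zero_le
  haveI : Nonempty (Fin n) := Fin.pos_iff_nonempty.mp hn
  haveI : Nonempty (Fin m) := Fin.pos_iff_nonempty.mp hm
  have hFeq : (fun x : E2 n m =>
      ε * Real.log (∑ i, ∑ j,
        Real.exp (((WithLp.equiv 2 _ x).1 i + (WithLp.equiv 2 _ x).2 j - C i j) / ε)))
      = FF C ε := by
    funext x
    unfold FF SS ee
    rw [Fintype.sum_prod_type]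
    simp only [inner_vv]
  rw [hFeq]
  refine ⟨contDiff_FF C ε hε, ?_⟩
  have hgrad : (fun x : E2 n m => gradient (FF C ε) x) = GG C ε :=
    funext fun x => (hasGradientAt_FF C ε hε x).gradient
  rw [hgrad]
  have hdiff : Differentiable ℝ (GG C ε) := fun x =>
    (hasFDerivAt_GG C ε hε x).differentiableAt
  refine lipschitzWith_of_nnnorm_fderiv_le hdiff fun x => ?_
  rw [(hasFDerivAt_GG C ε hε x).fderiv, ← norm_toNNReal]
  exact Real.toNNReal_le_toNNReal (HH_norm_le C ε hε x)
end

section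
/- For ε > 0, the conjugate F_b*(f) of a ↦ W^ε_C(a,b) (over a ∈ Σ_n) is C^∞ and its gradient is 1/ε-Lipschitz on ℝ^n. -/
open Finset Real

def simplex (n : ℕ) : Set (Fin n → ℝ) := {a | (∀ i, 0 ≤ a i) ∧ ∑ i, a i = 1}

/-- The Fenchel conjugate of `a ↦ W^ε_C(a,b)` over the simplex. -/
noncomputable def Fstar {n m : ℕ} (C : Matrix (Fin n) (Fin m) ℝ) (ε : ℝ)
    (b : Fin m → ℝ) (f : EuclideanSpace ℝ (Fin n)) : ℝ :=
  sSup {v | ∃ a ∈ simplex n, v = ∑ i, f i * a i - W C ε a b}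

section Duality
variable {n m : ℕ} (C : Matrix (Fin n) (Fin m) ℝ) (ε : ℝ) (b : Fin m → ℝ)

noncomputable def Zc (f : Fin n → ℝ) (j : Fin m) : ℝ := ∑ i, Real.exp ((f i - C i j) / ε)

noncomputable def gfun (f : Fin n → ℝ) : ℝ :=
  ε * (-∑ j, b j * (Real.log (b j) - 1)) + ε * ∑ j, b j * Real.log (Zc C ε f j)

noncomputable def Pstar (f : Fin n → ℝ) : Matrix (Fin n) (Fin m) ℝ :=
  fun i j => b j * Real.exp ((f i - C i j) / ε) / Zc C ε f j

variable {C ε b}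

lemma Zc_pos [NeZero n] (hε : 0 < ε) (f : Fin n → ℝ) (j : Fin m) : 0 < Zc C ε f j :=
  Finset.sum_pos (fun i _ => Real.exp_pos _) ⟨⟨0, Nat.pos_of_ne_zero (NeZero.ne n)⟩, Finset.mem_univ _⟩

lemma Pstar_pos [NeZero n] (hε : 0 < ε) (hb : ∀ j, 0 < b j) (f : Fin n → ℝ) (i : Fin n) (j : Fin m) :
    0 < Pstar C ε b f i j :=
  div_pos (mul_pos (hb j) (Real.exp_pos _)) (Zc_pos hε f j)

lemma log_Pstar [NeZero n] (hε : 0 < ε) (hb : ∀ j, 0 < b j) (f : Fin n → ℝ) (i : Fin n) (j : Fin m) :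
    Real.log (Pstar C ε b f i j)
      = Real.log (b j) + (f i - C i j) / ε - Real.log (Zc C ε f j) := by
  rw [Pstar, Real.log_div (mul_pos (hb j) (Real.exp_pos _)).ne' (Zc_pos hε f j).ne',
    Real.log_mul (hb j).ne' (Real.exp_pos _).ne', Real.log_exp]

lemma Pstar_colsum [NeZero n] (hε : 0 < ε) (f : Fin n → ℝ) (j : Fin m) :
    ∑ i, Pstar C ε b f i j = b j := by
  simp only [Pstar]
  rw [← Finset.sum_div, ← Finset.mul_sum]
  exact mul_div_cancel_right₀ _ (Zc_pos hε f j).ne'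

/-- tangent line inequality for `x log x - x` -/
lemma tangent_ineq {x t : ℝ} (hx : 0 ≤ x) (ht : 0 < t) :
    x * Real.log t - t ≤ x * Real.log x - x := by
  rcases eq_or_lt_of_le hx with h | h
  · simp [← h]; linarith
  · have h1 : Real.log (t / x) ≤ t / x - 1 := Real.log_le_sub_one_of_pos (div_pos ht h)
    have h2 : Real.log (t / x) = Real.log t - Real.log x := Real.log_div ht.ne' h.ne'
    have h3 : x * (t / x) = t := by field_simp
    nlinarith [mul_le_mul_of_nonneg_left h1 h.le]

/-- column-wise weak duality -/
lemma col_le [NeZero n] (hε : 0 < ε) (hb : ∀ j, 0 < b j) (f : Fin n → ℝ) (j : Fin m)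
    (p : Fin n → ℝ) (hp : ∀ i, 0 ≤ p i) (hsum : ∑ i, p i = b j) :
    ∑ i, p i * (f i - C i j) - ε * ∑ i, p i * (Real.log (p i) - 1)
      ≤ ε * (b j * Real.log (Zc C ε f j)) - ε * (b j * (Real.log (b j) - 1)) := by
  have key : ∀ i, p i * (f i - C i j) - ε * (p i * (Real.log (p i) - 1))
      ≤ ε * Pstar C ε b f i j
        + ε * (p i * (Real.log (Zc C ε f j) - Real.log (b j))) := by
    intro i
    have ht := Pstar_pos (C := C) hε hb f i j
    have htan := tangent_ineq (hp i) ht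
    have hlog := log_Pstar (C := C) hε hb f i j
    have hmul := mul_le_mul_of_nonneg_left htan hε.le
    rw [hlog] at hmul
    have hε' : ε ≠ 0 := hε.ne'
    have expand : ε * (p i * (Real.log (b j) + (f i - C i j) / ε - Real.log (Zc C ε f j)))
        = ε * p i * Real.log (b j) + p i * (f i - C i j)
          - ε * p i * Real.log (Zc C ε f j) := by
      field_simp
    nlinarith [hmul, expand]
  have hsum' := Finset.sum_le_sum (s := Finset.univ) (fun i _ => key i)
  rw [Finset.sum_sub_distrib] at hsum'
  have h2 : ∑ x : Fin n, ε * (p x * (Real.log (Zc C ε f j) - Real.log (b j)))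
      = ε * (b j * (Real.log (Zc C ε f j) - Real.log (b j))) := by
    rw [← Finset.mul_sum, ← Finset.sum_mul, hsum]
  have h3 : ∑ x : Fin n, ε * (p x * (Real.log (p x) - 1))
      = ε * ∑ x : Fin n, p x * (Real.log (p x) - 1) := (Finset.mul_sum _ _ _).symm
  have h4 : ∑ i : Fin n, ε * Pstar C ε b f i j = ε * b j := by
    rw [← Finset.mul_sum, Pstar_colsum hε]
  rw [Finset.sum_add_distrib, h2, h3, h4] at hsum'
  nlinarith [hsum']


variable [NeZero n]

lemma weak_duality (hε : 0 < ε) (hb : ∀ j, 0 < b j) (f : Fin n → ℝ)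
    {a : Fin n → ℝ} (ha : a ∈ simplex n) {P : Matrix (Fin n) (Fin m) ℝ}
    (hP : P ∈ couplings a b) :
    ∑ i, f i * a i - (dotp P C - ε * entropy P) ≤ gfun C ε b f := by
  obtain ⟨hP0, hProw, hPcol⟩ := hP
  have hfa : ∑ i, f i * a i = ∑ i, ∑ j, P i j * f i := by
    refine Finset.sum_congr rfl fun i _ => ?_
    rw [← hProw i, Finset.mul_sum]
    exact Finset.sum_congr rfl fun j _ => mul_comm _ _
  have key : ∑ i, f i * a i - (dotp P C - ε * entropy P)
      = ∑ j, (∑ i, P i j * (f i - C i j) - ε * ∑ i, P i j * (Real.log (P i j) - 1)) := by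
    rw [dotp, entropy, hfa]
    rw [Finset.sum_comm (f := fun i j => P i j * f i),
      Finset.sum_comm (f := fun i j => P i j * C i j),
      Finset.sum_comm (f := fun i j => P i j * (Real.log (P i j) - 1))]
    rw [Finset.sum_sub_distrib, ← Finset.mul_sum]
    have : ∀ j : Fin m, ∑ i, P i j * (f i - C i j)
        = ∑ i, P i j * f i - ∑ i, P i j * C i j := by
      intro j
      rw [← Finset.sum_sub_distrib]
      exact Finset.sum_congr rfl fun i _ => by ring
    simp only [this]
    rw [Finset.sum_sub_distrib]
    ring
  have hcols := Finset.sum_le_sum (s := Finset.univ)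
    (fun j _ => col_le (C := C) hε hb f j (fun i => P i j) (fun i => hP0 i j) (hPcol j))
  have hg : gfun C ε b f
      = ∑ j, (ε * (b j * Real.log (Zc C ε f j)) - ε * (b j * (Real.log (b j) - 1))) := by
    rw [gfun, Finset.sum_sub_distrib, ← Finset.mul_sum, ← Finset.mul_sum]
    ring
  rw [key, hg]
  exact hcols

lemma prodCoupling_mem (hb : ∀ j, 0 < b j) (hb1 : ∑ j, b j = 1)
    {a : Fin n → ℝ} (ha : a ∈ simplex n) :
    (fun i j => a i * b j) ∈ couplings a b :=
  ⟨fun i j => mul_nonneg (ha.1 i) (hb j).le,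
   fun i => by rw [← Finset.mul_sum, hb1, mul_one],
   fun j => by rw [← Finset.sum_mul, ha.2, one_mul]⟩

lemma W_lb (hε : 0 < ε) (hb : ∀ j, 0 < b j) (hb1 : ∑ j, b j = 1) (f : Fin n → ℝ)
    {a : Fin n → ℝ} (ha : a ∈ simplex n) :
    ∑ i, f i * a i - gfun C ε b f ≤ W C ε a b := by
  refine le_csInf ⟨_, (fun i j => a i * b j), prodCoupling_mem hb hb1 ha, rfl⟩ ?_
  rintro v ⟨P, hP, rfl⟩
  linarith [weak_duality (C := C) hε hb f ha hP]

noncomputable def astar (f : Fin n → ℝ) : Fin n → ℝ := fun i => ∑ j, Pstar C ε b f i j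

variable (C ε b) in
lemma Pstar_mem (hε : 0 < ε) (hb : ∀ j, 0 < b j) (f : Fin n → ℝ) :
    Pstar C ε b f ∈ couplings (astar (C := C) (ε := ε) (b := b) f) b :=
  ⟨fun i j => (Pstar_pos (C := C) hε hb f i j).le, fun i => rfl, fun j => Pstar_colsum hε f j⟩

lemma astar_mem (hε : 0 < ε) (hb : ∀ j, 0 < b j) (hb1 : ∑ j, b j = 1) (f : Fin n → ℝ) :
    astar (C := C) (ε := ε) (b := b) f ∈ simplex n := by
  constructor
  · exact fun i => Finset.sum_nonneg fun j _ => (Pstar_pos (C := C) hε hb f i j).le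
  · rw [show ∑ i, astar (C := C) (ε := ε) (b := b) f i = ∑ j, ∑ i, Pstar C ε b f i j from
      Finset.sum_comm]
    rw [← hb1]
    exact Finset.sum_congr rfl fun j _ => Pstar_colsum hε f j

lemma value_eq (hε : 0 < ε) (hb : ∀ j, 0 < b j) (f : Fin n → ℝ) :
    dotp (Pstar C ε b f) C - ε * entropy (Pstar C ε b f)
      = ∑ i, f i * astar (C := C) (ε := ε) (b := b) f i - gfun C ε b f := by
  have term : ∀ i j, Pstar C ε b f i j * C i j
      + ε * (Pstar C ε b f i j * (Real.log (Pstar C ε b f i j) - 1))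
      = f i * Pstar C ε b f i j
        + ε * (Pstar C ε b f i j * (Real.log (b j) - Real.log (Zc C ε f j) - 1)) := by
    intro i j
    rw [log_Pstar (C := C) hε hb f i j]
    have hε' : ε ≠ 0 := hε.ne'
    field_simp
    ring
  have lhs_eq : dotp (Pstar C ε b f) C - ε * entropy (Pstar C ε b f)
      = ∑ i, ∑ j, (Pstar C ε b f i j * C i j
        + ε * (Pstar C ε b f i j * (Real.log (Pstar C ε b f i j) - 1))) := by
    rw [dotp, entropy]
    simp only [Finset.sum_add_distrib, ← Finset.mul_sum]
    ring
  rw [lhs_eq]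
  simp only [term]
  rw [Finset.sum_comm (f := fun i j => f i * Pstar C ε b f i j
      + ε * (Pstar C ε b f i j * (Real.log (b j) - Real.log (Zc C ε f j) - 1)))]
  have inner : ∀ j : Fin m, ∑ i, (f i * Pstar C ε b f i j
      + ε * (Pstar C ε b f i j * (Real.log (b j) - Real.log (Zc C ε f j) - 1)))
      = ∑ i, f i * Pstar C ε b f i j
        + ε * (b j * (Real.log (b j) - Real.log (Zc C ε f j) - 1)) := by
    intro j
    rw [Finset.sum_add_distrib]
    congr 1
    rw [show ∀ x : ℝ, ∑ i, ε * (Pstar C ε b f i j * x)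
        = ε * ((∑ i, Pstar C ε b f i j) * x) from fun x => by
      rw [← Finset.mul_sum, ← Finset.sum_mul], Pstar_colsum hε]
  simp only [inner]
  rw [Finset.sum_add_distrib, Finset.sum_comm (f := fun j i => f i * Pstar C ε b f i j)]
  have h1 : ∑ i, ∑ j, f i * Pstar C ε b f i j
      = ∑ i, f i * astar (C := C) (ε := ε) (b := b) f i := by
    exact Finset.sum_congr rfl fun i _ => by rw [astar, Finset.mul_sum]
  have h2 : ∑ j, ε * (b j * (Real.log (b j) - Real.log (Zc C ε f j) - 1))
      = ε * ∑ j, b j * (Real.log (b j) - 1) - ε * ∑ j, b j * Real.log (Zc C ε f j) := by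
    rw [← Finset.mul_sum, ← mul_sub]
    congr 1
    rw [← Finset.sum_sub_distrib]
    exact Finset.sum_congr rfl fun j _ => by ring
  rw [h1, h2, gfun]
  ring


lemma W_astar (hε : 0 < ε) (hb : ∀ j, 0 < b j) (hb1 : ∑ j, b j = 1) (f : Fin n → ℝ) :
    W C ε (astar (C := C) (ε := ε) (b := b) f) b
      = ∑ i, f i * astar (C := C) (ε := ε) (b := b) f i - gfun C ε b f := by
  refine le_antisymm ?_ (W_lb hε hb hb1 f (astar_mem hε hb hb1 f))
  have hmem : dotp (Pstar C ε b f) C - ε * entropy (Pstar C ε b f)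
      ∈ {v | ∃ P ∈ couplings (astar (C := C) (ε := ε) (b := b) f) b,
          v = dotp P C - ε * entropy P} := ⟨Pstar C ε b f, Pstar_mem C ε b hε hb f, rfl⟩
  have hbdd : BddBelow {v | ∃ P ∈ couplings (astar (C := C) (ε := ε) (b := b) f) b,
      v = dotp P C - ε * entropy P} := by
    refine ⟨∑ i, f i * astar (C := C) (ε := ε) (b := b) f i - gfun C ε b f, ?_⟩
    rintro v ⟨P, hP, rfl⟩
    linarith [weak_duality (C := C) hε hb f (astar_mem hε hb hb1 f) hP]
  have := csInf_le hbdd hmem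
  rw [value_eq hε hb f] at this
  exact this

lemma Fstar_eq (hε : 0 < ε) (hb : ∀ j, 0 < b j) (hb1 : ∑ j, b j = 1) :
    Fstar C ε b = fun f : EuclideanSpace ℝ (Fin n) => gfun C ε b f := by
  funext f
  have hub : ∀ v ∈ {v | ∃ a ∈ simplex n, v = ∑ i, f i * a i - W C ε a b},
      v ≤ gfun C ε b f := by
    rintro v ⟨a, ha, rfl⟩
    linarith [W_lb (C := C) hε hb hb1 f ha]
  have hmem : gfun C ε b f ∈ {v | ∃ a ∈ simplex n, v = ∑ i, f i * a i - W C ε a b} := by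
    refine ⟨astar (C := C) (ε := ε) (b := b) f, astar_mem hε hb hb1 f, ?_⟩
    rw [W_astar hε hb hb1 f]
    ring
  exact le_antisymm (csSup_le ⟨_, hmem⟩ hub) (le_csSup ⟨_, hub⟩ hmem)

end Duality

section Deriv
variable {n m : ℕ} (C : Matrix (Fin n) (Fin m) ℝ) (ε : ℝ) (b : Fin m → ℝ)

abbrev E (n : ℕ) := EuclideanSpace ℝ (Fin n)

noncomputable def fromPi (n : ℕ) : (Fin n → ℝ) ≃L[ℝ] EuclideanSpace ℝ (Fin n) :=
  (PiLp.continuousLinearEquiv 2 ℝ fun _ : Fin n => ℝ).symm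

noncomputable def ZL (f : E n) (j : Fin m) : E n →L[ℝ] ℝ :=
  ∑ i, Real.exp ((f i - C i j) / ε) • (ε⁻¹ • (EuclideanSpace.proj (𝕜 := ℝ) i))

noncomputable def smaxE (f : E n) (j : Fin m) : E n :=
  (WithLp.toLp 2 (fun i => Real.exp ((f i - C i j) / ε - Real.log (Zc C ε f j))) : E n)

noncomputable def G (f : E n) : E n := ∑ j, b j • smaxE C ε f j

variable {C ε b}
variable [NeZero n]

lemma Zc_pos' (hε : 0 < ε) (f : Fin n → ℝ) (j : Fin m) : 0 < Zc C ε f j :=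
  Finset.sum_pos (fun i _ => Real.exp_pos _)
    ⟨⟨0, Nat.pos_of_ne_zero (NeZero.ne n)⟩, Finset.mem_univ _⟩

lemma smaxE_apply (hε : 0 < ε) (f : E n) (j : Fin m) (i : Fin n) :
    smaxE C ε f j i = Real.exp ((f i - C i j) / ε) / Zc C ε f j := by
  rw [smaxE, PiLp.toLp_apply, Real.exp_sub, Real.exp_log (Zc_pos' hε f j)]

lemma smaxE_pos (hε : 0 < ε) (f : E n) (j : Fin m) (i : Fin n) : 0 < smaxE C ε f j i := by
  rw [smaxE_apply hε]; exact div_pos (Real.exp_pos _) (Zc_pos' hε f j)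

lemma smaxE_le_one (hε : 0 < ε) (f : E n) (j : Fin m) (i : Fin n) : smaxE C ε f j i ≤ 1 := by
  rw [smaxE_apply hε, div_le_one (Zc_pos' hε f j)]
  exact Finset.single_le_sum (f := fun k => Real.exp ((f k - C k j) / ε))
    (fun k _ => (Real.exp_pos _).le) (Finset.mem_univ i)

lemma smaxE_sum (hε : 0 < ε) (f : E n) (j : Fin m) : ∑ i, smaxE C ε f j i = 1 := by
  simp only [smaxE_apply hε]
  rw [← Finset.sum_div, show ∑ i, rexp ((f i - C i j) / ε) = Zc C ε f j from rfl,
    div_self (Zc_pos' hε f j).ne']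

lemma hasFDerivAt_coord (hε : 0 < ε) (i : Fin n) (c : ℝ) (f : E n) :
    HasFDerivAt (fun f : E n => (f i - c) / ε)
      (ε⁻¹ • (EuclideanSpace.proj (𝕜 := ℝ) i)) f := by
  simp only [div_eq_mul_inv]
  exact ((EuclideanSpace.proj (𝕜 := ℝ) (ι := Fin n) i).hasFDerivAt (x := f)).sub_const c
    |>.mul_const ε⁻¹

lemma hasFDerivAt_Zc (hε : 0 < ε) (f : E n) (j : Fin m) :
    HasFDerivAt (fun f : E n => Zc C ε f j) (ZL C ε f j) f := by
  apply HasFDerivAt.fun_sum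
  intro i _
  exact (hasFDerivAt_coord hε i (C i j) f).exp

lemma hasFDerivAt_smaxE (hε : 0 < ε) (f : E n) (j : Fin m) :
    HasFDerivAt (fun f : E n => smaxE C ε f j)
      (((fromPi n).toContinuousLinearMap).comp
        (ContinuousLinearMap.pi fun i => smaxE C ε f j i •
          (ε⁻¹ • (EuclideanSpace.proj (𝕜 := ℝ) i) - (Zc C ε f j)⁻¹ • ZL C ε f j))) f := by
  have hZ := Zc_pos' (C := C) hε f j
  have hlog := (hasFDerivAt_Zc hε f j).log hZ.ne'
  have hexp : ∀ i : Fin n, HasFDerivAt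
      (fun f : E n => Real.exp ((f i - C i j) / ε - Real.log (Zc C ε f j)))
      (Real.exp ((f i - C i j) / ε - Real.log (Zc C ε f j)) •
        (ε⁻¹ • (EuclideanSpace.proj (𝕜 := ℝ) i) - (Zc C ε f j)⁻¹ • ZL C ε f j)) f :=
    fun i => ((hasFDerivAt_coord hε i (C i j) f).sub hlog).exp
  have hpi : HasFDerivAt
      (fun (f : E n) (i : Fin n) => Real.exp ((f i - C i j) / ε - Real.log (Zc C ε f j)))
      (ContinuousLinearMap.pi fun i => smaxE C ε f j i •
        (ε⁻¹ • (EuclideanSpace.proj (𝕜 := ℝ) i) - (Zc C ε f j)⁻¹ • ZL C ε f j)) f := by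
    refine hasFDerivAt_pi'' fun i => ?_
    rw [ContinuousLinearMap.proj_pi]
    exact hexp i
  exact ((fromPi n).toContinuousLinearMap.hasFDerivAt.comp f hpi)

noncomputable def Dsmax (f : E n) (j : Fin m) : E n →L[ℝ] E n :=
  ((fromPi n).toContinuousLinearMap).comp
    (ContinuousLinearMap.pi fun i => smaxE C ε f j i •
      (ε⁻¹ • (EuclideanSpace.proj (𝕜 := ℝ) i) - (Zc C ε f j)⁻¹ • ZL C ε f j))

variable (C ε) in
lemma Dsmax_apply (hε : 0 < ε) (f v : E n) (j : Fin m) (i : Fin n) :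
    (Dsmax (C := C) (ε := ε) f j) v i
      = smaxE C ε f j i * (ε⁻¹ * (v i - ∑ k, smaxE C ε f j k * v k)) := by
  have hZ := Zc_pos' (C := C) hε f j
  have h1 : (ZL C ε f j) v = ∑ k, Real.exp ((f k - C k j) / ε) * (ε⁻¹ * v k) := by
    simp [ZL, ContinuousLinearMap.sum_apply]
  have h2 : (Zc C ε f j)⁻¹ * (ZL C ε f j v) = ε⁻¹ * ∑ k, smaxE C ε f j k * v k := by
    rw [h1, Finset.mul_sum, Finset.mul_sum]
    refine Finset.sum_congr rfl fun k _ => ?_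
    rw [smaxE_apply hε, div_eq_mul_inv]
    ring
  have hfp : ∀ x : Fin n → ℝ, (fromPi n x : E n) i = x i := fun _ => rfl
  have h3 : (Dsmax (C := C) (ε := ε) f j) v i
      = smaxE C ε f j i * (ε⁻¹ * v i - (Zc C ε f j)⁻¹ * (ZL C ε f j v)) := by
    simp [Dsmax, hfp, ContinuousLinearMap.pi_apply, smul_eq_mul]
  rw [h3, h2]
  ring

variable (C ε) in
lemma Dsmax_norm (hε : 0 < ε) (f : E n) (j : Fin m) :
    ‖Dsmax (C := C) (ε := ε) f j‖ ≤ ε⁻¹ := by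
  refine ContinuousLinearMap.opNorm_le_bound _ (inv_nonneg.2 hε.le) fun v => ?_
  set σ : Fin n → ℝ := fun i => smaxE C ε f j i with hσ
  set S : ℝ := ∑ k, σ k * v k with hS
  have hσ0 : ∀ i, 0 < σ i := fun i => smaxE_pos hε f j i
  have hσ1 : ∀ i, σ i ≤ 1 := fun i => smaxE_le_one hε f j i
  have hsum1 : ∑ i, σ i = 1 := smaxE_sum hε f j
  have key : ∑ i, (σ i * (ε⁻¹ * (v i - S))) ^ 2 ≤ ε⁻¹ ^ 2 * ∑ i, (v i) ^ 2 := by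
    have step1 : ∀ i : Fin n, (σ i * (ε⁻¹ * (v i - S))) ^ 2
        ≤ ε⁻¹ ^ 2 * (σ i * (v i - S) ^ 2) := by
      intro i
      have h := hσ0 i
      have h1 := hσ1 i
      nlinarith [sq_nonneg (v i - S), sq_nonneg ε⁻¹]
    have step2 : ∑ i, σ i * (v i - S) ^ 2 = ∑ i, σ i * (v i) ^ 2 - S ^ 2 := by
      have expand : ∀ i : Fin n, σ i * (v i - S) ^ 2
          = σ i * (v i) ^ 2 - 2 * S * (σ i * v i) + S ^ 2 * σ i := fun i => by ring
      rw [Finset.sum_congr rfl fun i _ => expand i, Finset.sum_add_distrib,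
        Finset.sum_sub_distrib, ← Finset.mul_sum, ← Finset.mul_sum, ← hS, hsum1]
      ring
    have step3 : ∑ i, σ i * (v i) ^ 2 ≤ ∑ i, (v i) ^ 2 :=
      Finset.sum_le_sum fun i _ => by nlinarith [sq_nonneg (v i), hσ0 i, hσ1 i]
    calc ∑ i, (σ i * (ε⁻¹ * (v i - S))) ^ 2
        ≤ ∑ i, ε⁻¹ ^ 2 * (σ i * (v i - S) ^ 2) := Finset.sum_le_sum fun i _ => step1 i
      _ = ε⁻¹ ^ 2 * (∑ i, σ i * (v i - S) ^ 2) := by rw [← Finset.mul_sum]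
      _ = ε⁻¹ ^ 2 * (∑ i, σ i * (v i) ^ 2 - S ^ 2) := by rw [step2]
      _ ≤ ε⁻¹ ^ 2 * ∑ i, (v i) ^ 2 := by nlinarith [sq_nonneg S, sq_nonneg ε⁻¹]
  have hnorm : ‖(Dsmax (C := C) (ε := ε) f j) v‖
      = Real.sqrt (∑ i, (σ i * (ε⁻¹ * (v i - S))) ^ 2) := by
    rw [EuclideanSpace.norm_eq]
    congr 1
    refine Finset.sum_congr rfl fun i _ => ?_
    rw [Dsmax_apply C ε hε f v j i, Real.norm_eq_abs, sq_abs]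
  have hv : ‖v‖ = Real.sqrt (∑ i, (v i) ^ 2) := by
    rw [EuclideanSpace.norm_eq]
    congr 1
    exact Finset.sum_congr rfl fun i _ => by rw [Real.norm_eq_abs, sq_abs]
  rw [hnorm, hv]
  have := Real.sqrt_le_sqrt key
  rw [Real.sqrt_mul (sq_nonneg _), Real.sqrt_sq (inv_nonneg.2 hε.le)] at this
  exact this

variable (C ε) in
lemma smaxE_lipschitz (hε : 0 < ε) (j : Fin m) :
    LipschitzWith (Real.toNNReal ε⁻¹) (fun f : E n => smaxE C ε f j) := by
  refine lipschitzWith_of_nnnorm_fderiv_le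
    (fun f => (hasFDerivAt_smaxE hε f j).differentiableAt) fun f => ?_
  rw [(hasFDerivAt_smaxE hε f j).fderiv]
  rw [← NNReal.coe_le_coe, coe_nnnorm, Real.coe_toNNReal _ (inv_nonneg.2 hε.le)]
  exact Dsmax_norm C ε hε f j

variable (C ε b) in
lemma G_apply (hε : 0 < ε) (f : E n) (i : Fin n) :
    G C ε b f i = ∑ j, b j * smaxE C ε f j i := by
  rw [G]
  rw [show ((∑ j, b j • smaxE C ε f j : E n) i) = ∑ j, (b j • smaxE C ε f j : E n) i from
    by rw [WithLp.ofLp_sum]; exact Finset.sum_apply i Finset.univ _]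
  rfl

variable (C ε b) in
lemma hasGradientAt_gfun (hε : 0 < ε) (f : E n) :
    HasGradientAt (fun f : E n => gfun C ε b f) (G C ε b f) f := by
  have hZ : ∀ j, 0 < Zc C ε f j := fun j => Zc_pos' hε f j
  have h1 : HasFDerivAt (fun f : E n => ∑ j, b j * Real.log (Zc C ε f j))
      (∑ j, b j • ((Zc C ε f j)⁻¹ • ZL C ε f j)) f :=
    HasFDerivAt.fun_sum fun j _ => ((hasFDerivAt_Zc hε f j).log (hZ j).ne').const_mul (b j)
  have h2 : HasFDerivAt (fun f : E n => gfun C ε b f)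
      (ε • ∑ j, b j • ((Zc C ε f j)⁻¹ • ZL C ε f j)) f := by
    have := (h1.const_mul ε).const_add (ε * (-∑ j, b j * (Real.log (b j) - 1)))
    exact this
  have h3 : (ε • ∑ j, b j • ((Zc C ε f j)⁻¹ • ZL C ε f j))
      = InnerProductSpace.toDual ℝ (E n) (G C ε b f) := by
    ext v
    rw [InnerProductSpace.toDual_apply_apply]
    rw [show (inner ℝ (G C ε b f) v : ℝ) = ∑ i, G C ε b f i * v i from by
      simp [PiLp.inner_apply, RCLike.inner_apply, mul_comm]]
    simp only [ContinuousLinearMap.smul_apply, ContinuousLinearMap.sum_apply, smul_eq_mul]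
    have hZL : ∀ j, (ZL C ε f j) v = ∑ i, Real.exp ((f i - C i j) / ε) * (ε⁻¹ * v i) :=
      fun j => by simp [ZL, ContinuousLinearMap.sum_apply]
    simp only [hZL, G_apply C ε b hε f]
    have hj : ∀ j : Fin m,
        ε * (b j * ((Zc C ε f j)⁻¹ * ∑ i, rexp ((f i - C i j) / ε) * (ε⁻¹ * v i)))
        = ∑ i, b j * smaxE C ε f j i * v i := by
      intro j
      rw [Finset.mul_sum, Finset.mul_sum, Finset.mul_sum]
      refine Finset.sum_congr rfl fun i _ => ?_
      rw [smaxE_apply hε]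
      have hεε : ε * ε⁻¹ = 1 := mul_inv_cancel₀ hε.ne'
      linear_combination (b j * rexp ((f i - C i j) / ε) * v i * (Zc C ε f j)⁻¹) * hεε
    rw [Finset.mul_sum, Finset.sum_congr rfl fun j _ => hj j, Finset.sum_comm]
    refine Finset.sum_congr rfl fun i _ => ?_
    rw [Finset.sum_mul]
  rw [hasGradientAt_iff_hasFDerivAt]
  rw [← h3]
  exact h2

variable (C ε b) in
lemma contDiff_gfun (hε : 0 < ε) : ContDiff ℝ (⊤ : ℕ∞) (fun f : E n => gfun C ε b f) := by
  have hZc : ∀ j : Fin m, ContDiff ℝ (⊤ : ℕ∞) (fun f : E n => Zc C ε f j) := by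
    intro j
    refine ContDiff.sum fun i _ => ContDiff.exp ?_
    exact (((EuclideanSpace.proj (𝕜 := ℝ) i).contDiff).sub contDiff_const).div_const ε
  have hlog : ∀ j : Fin m, ContDiff ℝ (⊤ : ℕ∞) (fun f : E n => Real.log (Zc C ε f j)) := by
    intro j
    rw [contDiff_iff_contDiffAt]
    exact fun f => ((hZc j).contDiffAt).log (Zc_pos' hε f j).ne'
  exact contDiff_const.add
    (contDiff_const.mul (ContDiff.sum fun j _ => contDiff_const.mul (hlog j)))

lemma lipschitzWith_sum {α : Type*} [PseudoEMetricSpace α] {ι : Type*}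
    (s : Finset ι) (F : ι → α → E n) (K : ι → NNReal)
    (h : ∀ j ∈ s, LipschitzWith (K j) (F j)) :
    LipschitzWith (∑ j ∈ s, K j) (fun x => ∑ j ∈ s, F j x) := by
  classical
  induction s using Finset.induction_on with
  | empty => simpa using LipschitzWith.const (0 : E n)
  | insert a s hx ih =>
    rw [Finset.sum_insert hx]
    have := (h a (Finset.mem_insert_self a s)).add
      (ih fun j hj => h j (Finset.mem_insert_of_mem hj))
    simpa [Finset.sum_insert hx] using this

lemma lipschitzWith_const_smul {α : Type*} [PseudoMetricSpace α] {K : NNReal}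
    {F : α → E n} (h : LipschitzWith K F) (c : ℝ) :
    LipschitzWith (‖c‖₊ * K) (fun x => c • F x) := by
  refine LipschitzWith.of_dist_le_mul fun x y => ?_
  rw [dist_smul₀]
  calc ‖c‖ * dist (F x) (F y) ≤ ‖c‖ * (K * dist x y) :=
        mul_le_mul_of_nonneg_left (h.dist_le_mul x y) (norm_nonneg c)
    _ = (‖c‖₊ * K : NNReal) * dist x y := by push_cast; ring

variable (C ε b) in
lemma G_lipschitz (hε : 0 < ε) (hb : ∀ j, 0 < b j) (hb1 : ∑ j, b j = 1) :
    LipschitzWith (Real.toNNReal (1 / ε)) (G C ε b) := by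
  have hK : ∀ j : Fin m, LipschitzWith (‖b j‖₊ * Real.toNNReal ε⁻¹)
      (fun f : E n => b j • smaxE C ε f j) :=
    fun j => lipschitzWith_const_smul (smaxE_lipschitz C ε hε j) (b j)
  have h := lipschitzWith_sum (s := Finset.univ)
    (F := fun j (f : E n) => b j • smaxE C ε f j)
    (K := fun j => ‖b j‖₊ * Real.toNNReal ε⁻¹) (fun j _ => hK j)
  have hKsum : (∑ j, ‖b j‖₊ * Real.toNNReal ε⁻¹) = Real.toNNReal (1 / ε) := by
    rw [← Finset.sum_mul]
    have h1 : (∑ j, ‖b j‖₊) = 1 := by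
      ext
      push_cast
      rw [show (∑ x : Fin m, ‖b x‖) = ∑ x, b x from Finset.sum_congr rfl fun j _ => by
        rw [Real.norm_eq_abs, abs_of_pos (hb j)], hb1]
    rw [h1, one_mul, one_div]
  rw [hKsum] at h
  exact h

end Deriv


theorem stmt14 {n m : ℕ} (b : Fin m → ℝ)
    (hb : (∀ j, 0 < b j) ∧ ∑ j, b j = 1)
    (C : Matrix (Fin n) (Fin m) ℝ) (ε : ℝ) (hε : 0 < ε) :
    ContDiff ℝ (⊤ : ℕ∞) (Fstar C ε b) ∧
    LipschitzWith (Real.toNNReal (1 / ε)) (fun f => gradient (Fstar C ε b) f) := by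
  obtain ⟨hb0, hb1⟩ := hb
  rcases Nat.eq_zero_or_pos n with hn | hn
  · subst hn
    have hsub : Subsingleton (EuclideanSpace ℝ (Fin 0)) :=
      ⟨fun a b => (WithLp.ext_iff 2).2 (funext fun i => i.elim0)⟩
    constructor
    · have h0 : Fstar C ε b = fun _ => Fstar C ε b 0 :=
        funext fun x => by rw [Subsingleton.elim x 0]
      rw [h0]; exact contDiff_const
    · refine LipschitzWith.of_dist_le_mul fun x y => ?_
      rw [Subsingleton.elim x y]
      simp
  · haveI : NeZero n := ⟨hn.ne'⟩
    have hFs : Fstar C ε b = fun f : EuclideanSpace ℝ (Fin n) => gfun C ε b f :=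
      Fstar_eq hε hb0 hb1
    constructor
    · rw [hFs]; exact contDiff_gfun C ε b hε
    · have hgrad : (fun f => gradient (Fstar C ε b) f) = G C ε b := by
        rw [hFs]
        exact funext fun f => (hasGradientAt_gfun C ε b hε f).gradient
      rw [hgrad]
      exact G_lipschitz C ε b hε hb0 hb1
end

section
/- Fixing g ∈ ℝ^m, the choice f = g^{c̄,ε}, where g^{c̄,ε}_i = ε log(a_i) − ε log ∑_j e^{(g_j − C_{ij})/ε}, maximizes the dual objective (f,g) ↦ ⟨f,a⟩ + ⟨g,b⟩ − ε ∑_{i,j} e^{(f_i + g_j − C_{ij})/ε} over f ∈ ℝ^n. -/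
/-!
The dual objective is separable in `f`: with `Sᵢ = ∑ⱼ exp ((gⱼ - Cᵢⱼ) / ε)` it equals
`∑ᵢ (fᵢ aᵢ - ε Sᵢ exp (fᵢ / ε))` plus a term independent of `f`. Each summand is a concave
function of `fᵢ`, maximized where `Sᵢ exp (fᵢ / ε) = aᵢ`, i.e. at `fᵢ = ε log aᵢ - ε log Sᵢ`;
the bound is the tangent-line inequality `t + 1 ≤ exp t` at that point.
-/

open Finset Real

theorem isMaxOn_mul_sub_mul_exp_div {a s ε : ℝ} (ha : 0 < a) (hs : 0 < s) (hε : 0 < ε) :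
    IsMaxOn (fun x => x * a - ε * (exp (x / ε) * s)) Set.univ (ε * log a - ε * log s) := by
  set x₀ := ε * log a - ε * log s
  have hdiv : x₀ / ε = log a - log s := by
    simp only [x₀]
    field_simp
  have hexp₀ : exp (x₀ / ε) * s = a := by
    rw [hdiv, exp_sub, exp_log ha, exp_log hs, div_mul_cancel₀ a hs.ne']
  intro x _
  have hexp : exp (x / ε) * s = a * exp ((x - x₀) / ε) := by
    rw [← hexp₀, mul_right_comm, ← exp_add]
    congr 2
    ring
  have htangent : a * ((x - x₀) / ε + 1) ≤ a * exp ((x - x₀) / ε) :=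
    mul_le_mul_of_nonneg_left (add_one_le_exp _) ha.le
  have hscale : ε * (a * ((x - x₀) / ε + 1)) = a * (x - x₀) + ε * a := by
    field_simp
  simp only [Set.mem_ofPred_eq, hexp, hexp₀]
  linarith [mul_le_mul_of_nonneg_left htangent hε.le]

theorem isMaxOn_sum_apply {ι : Type*} [Fintype ι] {φ : ι → ℝ → ℝ} {x : ι → ℝ}
    (h : ∀ i, IsMaxOn (φ i) Set.univ (x i)) :
    IsMaxOn (fun f : ι → ℝ => ∑ i, φ i (f i)) Set.univ x :=
  fun f _ => show ∑ i, φ i (f i) ≤ ∑ i, φ i (x i) from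
    sum_le_sum fun i _ => h i (Set.mem_univ (f i))

theorem sum_exp_add_div {ι : Type*} [Fintype ι] (x ε : ℝ) (u : ι → ℝ) :
    ∑ j, exp ((x + u j) / ε) = exp (x / ε) * ∑ j, exp (u j / ε) := by
  rw [mul_sum]
  exact sum_congr rfl fun j _ => by rw [← exp_add, add_div]

theorem stmt15 {n m : ℕ} (a : Fin n → ℝ) (b : Fin m → ℝ)
    (ha : (∀ i, 0 < a i) ∧ ∑ i, a i = 1) (hb : (∀ j, 0 ≤ b j) ∧ ∑ j, b j = 1)
    (C : Matrix (Fin n) (Fin m) ℝ) (ε : ℝ) (hε : 0 < ε)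
    (g : Fin m → ℝ) :
    IsMaxOn
      (fun f : Fin n → ℝ =>
        ∑ i, f i * a i + ∑ j, g j * b j
          - ε * ∑ i, ∑ j, Real.exp ((f i + g j - C i j) / ε))
      Set.univ
      (fun i => ε * Real.log (a i)
        - ε * Real.log (∑ j, Real.exp ((g j - C i j) / ε))) := by
  set S : Fin n → ℝ := fun i => ∑ j, exp ((g j - C i j) / ε)
  obtain ⟨j₀, -, -⟩ : ∃ j ∈ univ, b j ≠ 0 :=
    exists_ne_zero_of_sum_ne_zero (by rw [hb.2]; exact one_ne_zero)
  have hS : ∀ i, 0 < S i := fun i => sum_pos (fun j _ => exp_pos _) ⟨j₀, mem_univ j₀⟩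
  have hseparable : (fun f : Fin n → ℝ => ∑ i, f i * a i + ∑ j, g j * b j
      - ε * ∑ i, ∑ j, exp ((f i + g j - C i j) / ε))
      = fun f => ∑ i, (f i * a i - ε * (exp (f i / ε) * S i)) + ∑ j, g j * b j := by
    funext f
    simp only [add_sub_assoc, sum_exp_add_div, S, sum_sub_distrib, ← mul_sum]
    ring
  rw [hseparable]
  exact (isMaxOn_sum_apply fun i =>
    isMaxOn_mul_sub_mul_exp_div (ha.1 i) (hS i) hε).add isMaxOn_const
end
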